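/- arXiv:1904.05134 — 7 statements merged into one kernel-verified Lean document; each statement's English description precedes it below -/
import Mathlib

section
/- For h > 0 and q1, q2 > 0 with Q := 1/q1 + 1/q2 > h, the integral over ℝ² of ρ(t,s)^h · 1{ρ(t,s) > δ} dt ds is finite for any δ > 0, where ρ(t,s) := (|t|^{q1} + |s|^{q2})^{-1}. -/
/-!
Write `Q = 1/q1 + 1/q2`. Weighted AM–GM with weights `1/(q1 Q)` and `1/(q2 Q)` gives
`(|t| |s|)^(1/Q) ≤ |t|^q1 + |s|^q2`, hence `ρ^h ≤ |t|^(-h/Q) |s|^(-h/Q)` off the axes.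
On `{ρ > δ}` both coordinates are bounded, and `h/Q < 1` makes `|x|^(-h/Q)` integrable
near `0`, so by Tonelli the integral is at most a product of two finite one-dimensional ones.
-/

open MeasureTheory Real Set

noncomputable def rho (q1 q2 t s : ℝ) : ℝ := (|t| ^ q1 + |s| ^ q2)⁻¹

open scoped ENNReal

theorem intervalIntegrable_abs_rpow {r : ℝ} (hr : -1 < r) (a b : ℝ) :
    IntervalIntegrable (fun x => |x| ^ r) volume a b := by
  have hpos : ∀ c, 0 ≤ c → IntervalIntegrable (fun x => |x| ^ r) volume 0 c := fun c hc =>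
    (intervalIntegral.intervalIntegrable_rpow' hr).congr_uIoo fun x hx => by
      rw [uIoo_of_le hc] at hx
      simp only [abs_of_pos hx.1]
  have hzero : ∀ c, IntervalIntegrable (fun x => |x| ^ r) volume 0 c := by
    intro c
    rcases le_total 0 c with hc | hc
    · exact hpos c hc
    · simpa using (IntervalIntegrable.iff_comp_neg (by simp)).1 (hpos (-c) (by linarith))
  exact (hzero a).symm.trans (hzero b)

theorem rho_comm (q1 q2 t s : ℝ) : rho q1 q2 t s = rho q2 q1 s t := by
  rw [rho, rho, add_comm]

theorem abs_lt_of_lt_rho {q1 q2 δ t s : ℝ} (hq1 : 0 < q1) (hδ : 0 < δ)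
    (hρ : δ < rho q1 q2 t s) : |t| < δ⁻¹ ^ q1⁻¹ := by
  have hsum : 0 < |t| ^ q1 + |s| ^ q2 := inv_pos.1 (hδ.trans hρ)
  have hlt : |t| ^ q1 + |s| ^ q2 < δ⁻¹ := (lt_inv_comm₀ hδ hsum).1 hρ
  rw [lt_rpow_inv_iff_of_pos (abs_nonneg t) (inv_nonneg.2 hδ.le) hq1]
  linarith [rpow_nonneg (abs_nonneg s) q2]

theorem abs_mul_abs_rpow_le {q1 q2 : ℝ} (hq1 : 0 < q1) (hq2 : 0 < q2) (t s : ℝ) :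
    (|t| * |s|) ^ (1 / q1 + 1 / q2)⁻¹ ≤ |t| ^ q1 + |s| ^ q2 := by
  set Q := 1 / q1 + 1 / q2
  have hQ : 0 < Q := by positivity
  have hw : 1 / q1 / Q + 1 / q2 / Q = 1 := by rw [← add_div, div_self hQ.ne']
  have hpow : ∀ {q : ℝ} (x : ℝ), 0 < q → (|x| ^ q) ^ (1 / q / Q) = |x| ^ Q⁻¹ :=
    fun x hq => by
      rw [← rpow_mul (abs_nonneg x)]
      congr 1
      field_simp
  have amgm := geom_mean_le_arith_mean2_weighted (by positivity) (by positivity)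
    (rpow_nonneg (abs_nonneg t) q1) (rpow_nonneg (abs_nonneg s) q2) hw
  rw [hpow t hq1, hpow s hq2, ← mul_rpow (abs_nonneg t) (abs_nonneg s)] at amgm
  have hw1 : 1 / q1 / Q ≤ 1 := by linarith [show 0 ≤ 1 / q2 / Q by positivity]
  have hw2 : 1 / q2 / Q ≤ 1 := by linarith [show 0 ≤ 1 / q1 / Q by positivity]
  nlinarith [rpow_nonneg (abs_nonneg t) q1, rpow_nonneg (abs_nonneg s) q2]

theorem rho_rpow_le {q1 q2 h t s : ℝ} (hq1 : 0 < q1) (hq2 : 0 < q2) (hh : 0 ≤ h)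
    (ht : t ≠ 0) (hs : s ≠ 0) :
    rho q1 q2 t s ^ h ≤
      |t| ^ (-(h / (1 / q1 + 1 / q2))) * |s| ^ (-(h / (1 / q1 + 1 / q2))) := by
  set Q := 1 / q1 + 1 / q2
  have hts : 0 < |t| * |s| := by positivity
  calc rho q1 q2 t s ^ h ≤ (((|t| * |s|) ^ Q⁻¹)⁻¹) ^ h :=
        rpow_le_rpow (by unfold rho; positivity)
          (inv_anti₀ (by positivity) (abs_mul_abs_rpow_le hq1 hq2 t s)) hh
    _ = (|t| * |s|) ^ (-(h / Q)) := by
        rw [← rpow_neg hts.le, ← rpow_mul hts.le]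
        ring_nf
    _ = _ := mul_rpow (abs_nonneg t) (abs_nonneg s)

theorem ae_fst_ne_zero_and_snd_ne_zero : ∀ᵐ p : ℝ × ℝ, p.1 ≠ 0 ∧ p.2 ≠ 0 := by
  rw [Measure.volume_eq_prod]
  exact (Measure.quasiMeasurePreserving_fst.ae (Measure.ae_ne volume 0)).and
    (Measure.quasiMeasurePreserving_snd.ae (Measure.ae_ne volume 0))

theorem stmt_0 (q1 q2 h δ : ℝ) (hq1 : 0 < q1) (hq2 : 0 < q2)
    (hh : 0 < h) (hδ : 0 < δ) (hQ : h < 1 / q1 + 1 / q2) :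
    ∫⁻ p : ℝ × ℝ in {p : ℝ × ℝ | δ < rho q1 q2 p.1 p.2},
      ENNReal.ofReal (rho q1 q2 p.1 p.2 ^ h) < ⊤ := by
  set α := h / (1 / q1 + 1 / q2)
  have hα : -1 < -α := neg_lt_neg ((div_lt_one (by positivity)).2 hQ)
  set g : ℝ → ℝ≥0∞ := fun x => ENNReal.ofReal (|x| ^ (-α))
  set T := δ⁻¹ ^ q1⁻¹
  set S := δ⁻¹ ^ q2⁻¹
  have hbox : {p : ℝ × ℝ | δ < rho q1 q2 p.1 p.2} ⊆ Icc (-T) T ×ˢ Icc (-S) S :=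
    fun p hp =>
      ⟨abs_le.1 (abs_lt_of_lt_rho hq1 hδ hp).le,
        abs_le.1 (abs_lt_of_lt_rho hq2 hδ (by rw [← rho_comm]; exact hp)).le⟩
  have hfin : ∀ c, 0 < c → ∫⁻ x in Icc (-c) c, g x < ⊤ := fun c hc =>
    ((intervalIntegrable_iff_integrableOn_Icc_of_le (by linarith)).1
      (intervalIntegrable_abs_rpow hα (-c) c)).lintegral_lt_top
  -- the bound fails on the axes, where `0 ^ (-α) = 0`
  have hbound : ∀ᵐ p : ℝ × ℝ, ENNReal.ofReal (rho q1 q2 p.1 p.2 ^ h) ≤ g p.1 * g p.2 :=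
    ae_fst_ne_zero_and_snd_ne_zero.mono fun p hp => by
      rw [← ENNReal.ofReal_mul (by positivity)]
      exact ENNReal.ofReal_le_ofReal (rho_rpow_le hq1 hq2 hh.le hp.1 hp.2)
  calc _ ≤ ∫⁻ p : ℝ × ℝ in {p : ℝ × ℝ | δ < rho q1 q2 p.1 p.2}, g p.1 * g p.2 :=
        lintegral_mono_ae (ae_restrict_of_ae hbound)
    _ ≤ ∫⁻ p : ℝ × ℝ in Icc (-T) T ×ˢ Icc (-S) S, g p.1 * g p.2 :=
        lintegral_mono_set hbox
    _ = (∫⁻ x in Icc (-T) T, g x) * ∫⁻ x in Icc (-S) S, g x := by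
        rw [Measure.volume_eq_prod, ← Measure.prod_restrict]
        exact lintegral_prod_mul (by fun_prop) (by fun_prop)
    _ < ⊤ := ENNReal.mul_lt_top (hfin T (by positivity)) (hfin S (by positivity))
end

section
/- Suppose q1, q2 > 0 satisfy Q := 1/q1 + 1/q2 < 1 and Q_{edge,1} := 3/(2q1) + 1/q2 < 1. Then ∫₀^∞ ( ∫₁^∞ ∫₀^∞ ρ(t+u,s) ds dt )² du < ∞, where ρ(t,s) = (|t|^{q1} + |s|^{q2})^{-1}. -/
open MeasureTheory Real Set

lemma ofReal_int_le (μ : Measure ℝ) (f : ℝ → ℝ) (hf : ∀ x, 0 ≤ f x) :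
    ENNReal.ofReal (∫ x, f x ∂μ) ≤ ∫⁻ x, ENNReal.ofReal (f x) ∂μ := by
  calc ENNReal.ofReal (∫ x, f x ∂μ) ≤ ‖∫ x, f x ∂μ‖₊ := Real.ofReal_le_enorm _
    _ ≤ ∫⁻ x, ‖f x‖₊ ∂μ := enorm_integral_le_lintegral_enorm _
    _ = ∫⁻ x, ENNReal.ofReal (f x) ∂μ :=
        lintegral_congr fun x => Real.enorm_eq_ofReal (hf x)

lemma lint_rpow {r c : ℝ} (hr : r < -1) (hc : 0 < c) :
    ∫⁻ x in Ioi c, ENNReal.ofReal (x ^ r) = ENNReal.ofReal (-c ^ (r + 1) / (r + 1)) := by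
  rw [← ofReal_integral_eq_lintegral_ofReal (integrableOn_Ioi_rpow_of_lt hr hc)
    ((ae_restrict_iff' measurableSet_Ioi).2 (ae_of_all _ fun x hx =>
      Real.rpow_nonneg (le_of_lt (hc.trans hx)) r)),
    integral_Ioi_rpow_of_lt hr hc]

lemma innerS {q2 : ℝ} (hq2 : 1 < q2) {a : ℝ} (ha : 0 < a) :
    ∫⁻ s in Ioi (0:ℝ), ENNReal.ofReal ((a + |s| ^ q2)⁻¹)
      ≤ ENNReal.ofReal ((1 + (q2 - 1)⁻¹) * a ^ (1 / q2 - 1)) := by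
  have hq2' : (0:ℝ) < q2 := by linarith
  set b := a ^ (1 / q2) with hbdef
  have hb0 : 0 < b := Real.rpow_pos_of_pos ha _
  have hae : 0 ≤ a ^ (1 / q2 - 1) := Real.rpow_nonneg ha.le _
  have hsplit : Ioi (0:ℝ) = Ioc 0 b ∪ Ioi b := (Ioc_union_Ioi_eq_Ioi hb0.le).symm
  rw [hsplit, lintegral_union measurableSet_Ioi Ioc_disjoint_Ioi_same]
  have key : a⁻¹ * b = a ^ (1 / q2 - 1) := by
    rw [Real.rpow_sub ha, Real.rpow_one, hbdef]
    ring
  have h1 : ∫⁻ s in Ioc (0:ℝ) b, ENNReal.ofReal ((a + |s| ^ q2)⁻¹)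
      ≤ ENNReal.ofReal (a ^ (1 / q2 - 1)) := by
    calc ∫⁻ s in Ioc (0:ℝ) b, ENNReal.ofReal ((a + |s| ^ q2)⁻¹)
        ≤ ∫⁻ _ in Ioc (0:ℝ) b, ENNReal.ofReal a⁻¹ := by
          refine setLIntegral_mono' measurableSet_Ioc fun s _ => ?_
          refine ENNReal.ofReal_le_ofReal ?_
          have h0 : 0 ≤ |s| ^ q2 := Real.rpow_nonneg (abs_nonneg _) _
          exact inv_anti₀ ha (by linarith)
      _ = ENNReal.ofReal a⁻¹ * volume (Ioc (0:ℝ) b) := setLIntegral_const _ _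
      _ = ENNReal.ofReal a⁻¹ * ENNReal.ofReal b := by rw [Real.volume_Ioc, sub_zero]
      _ = ENNReal.ofReal (a⁻¹ * b) := (ENNReal.ofReal_mul (inv_nonneg.2 ha.le)).symm
      _ = ENNReal.ofReal (a ^ (1 / q2 - 1)) := by rw [key]
  have h2 : ∫⁻ s in Ioi b, ENNReal.ofReal ((a + |s| ^ q2)⁻¹)
      ≤ ENNReal.ofReal ((q2 - 1)⁻¹ * a ^ (1 / q2 - 1)) := by
    have step : ∫⁻ s in Ioi b, ENNReal.ofReal ((a + |s| ^ q2)⁻¹)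
        ≤ ∫⁻ s in Ioi b, ENNReal.ofReal (s ^ (-q2)) := by
      refine setLIntegral_mono' measurableSet_Ioi fun s hs => ?_
      have hs0 : 0 < s := hb0.trans hs
      refine ENNReal.ofReal_le_ofReal ?_
      rw [Real.rpow_neg hs0.le]
      refine inv_anti₀ (Real.rpow_pos_of_pos hs0 _) ?_
      rw [abs_of_pos hs0]
      linarith [Real.rpow_nonneg ha.le (1:ℝ)]
    refine step.trans ?_
    rw [lint_rpow (by linarith) hb0]
    refine le_of_eq (congrArg _ ?_)
    have hbp : b ^ (-q2 + 1) = a ^ (1 / q2 - 1) := by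
      rw [hbdef, ← Real.rpow_mul ha.le]
      congr 1
      field_simp
      ring
    have h9 : (-q2 + 1) = -(q2 - 1) := by ring
    rw [hbp, h9, div_neg, neg_div, neg_neg, div_eq_mul_inv, mul_comm]
  calc _ ≤ ENNReal.ofReal (a ^ (1 / q2 - 1)) +
        ENNReal.ofReal ((q2 - 1)⁻¹ * a ^ (1 / q2 - 1)) := add_le_add h1 h2
    _ = ENNReal.ofReal (a ^ (1 / q2 - 1) + (q2 - 1)⁻¹ * a ^ (1 / q2 - 1)) :=
        (ENNReal.ofReal_add hae (mul_nonneg (inv_nonneg.2 (by linarith)) hae)).symm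
    _ = ENNReal.ofReal ((1 + (q2 - 1)⁻¹) * a ^ (1 / q2 - 1)) := by ring_nf

theorem stmt_2 (q1 q2 : ℝ) (hq1 : 0 < q1) (hq2 : 0 < q2)
    (hQ : 1 / q1 + 1 / q2 < 1) (hE : 3 / (2 * q1) + 1 / q2 < 1) :
    ∫⁻ u in Ioi (0 : ℝ),
      ENNReal.ofReal ((∫ t in Ioi (1 : ℝ), ∫ s in Ioi (0 : ℝ),
        rho q1 q2 (t + u) s) ^ 2) < ⊤ := by
  have hq1' : (0:ℝ) < 1 / q1 := by positivity
  have hq2' : (1:ℝ) < q2 := by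
    have h : 1 / q2 < 1 := by linarith
    rw [div_lt_one hq2] at h
    exact h
  set α : ℝ := q1 * (1 / q2 - 1) with hαdef
  have hα : α < -(3/2) := by
    have h := (mul_lt_mul_iff_right₀ hq1).2 hE
    have h32 : q1 * (3 / (2 * q1)) = 3 / 2 := by field_simp
    rw [mul_add, mul_one, h32] at h
    have : α = q1 * (1 / q2) - q1 := by rw [hαdef]; ring
    linarith
  set β : ℝ := α / 2 - 1 / 4 with hβdef
  set γ : ℝ := α / 2 + 1 / 4 with hγdef
  have hβ : β < -1 := by rw [hβdef]; linarith
  have hγ : γ + γ < -1 := by rw [hγdef]; linarith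
  have hγ0 : γ ≤ 0 := by rw [hγdef]; linarith
  have hβγ : β + γ = α := by rw [hβdef, hγdef]; ring
  set C2 : ℝ := 1 + (q2 - 1)⁻¹ with hC2def
  have hC2 : 0 ≤ C2 := by
    have h : 0 ≤ (q2 - 1)⁻¹ := inv_nonneg.2 (by linarith)
    rw [hC2def]; linarith
  set Iβ : ℝ := -(1:ℝ) ^ (β + 1) / (β + 1) with hIβdef
  have hIβ : 0 ≤ Iβ := by
    rw [hIβdef, Real.one_rpow]
    exact div_nonneg_iff.2 (Or.inr ⟨by norm_num, by linarith⟩)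
  have hrho : ∀ t s : ℝ, 0 ≤ rho q1 q2 t s := by
    intro t s
    unfold rho
    positivity
  -- pointwise bound on the inner double integral
  have main : ∀ u : ℝ, u ∈ Ioi (0:ℝ) →
      ENNReal.ofReal ((∫ t in Ioi (1 : ℝ), ∫ s in Ioi (0 : ℝ),
        rho q1 q2 (t + u) s) ^ 2)
      ≤ ENNReal.ofReal ((C2 * Iβ) ^ 2) * ENNReal.ofReal ((1 + u) ^ (γ + γ)) := by
    intro u hu
    have hu0 : 0 < u := hu
    have hFnn : 0 ≤ ∫ t in Ioi (1 : ℝ), ∫ s in Ioi (0 : ℝ), rho q1 q2 (t + u) s :=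
      integral_nonneg fun t => integral_nonneg fun s => hrho _ _
    have step1 : ENNReal.ofReal (∫ t in Ioi (1 : ℝ), ∫ s in Ioi (0 : ℝ),
        rho q1 q2 (t + u) s)
        ≤ ENNReal.ofReal (C2 * Iβ) * ENNReal.ofReal ((1 + u) ^ γ) := by
      have A := ofReal_int_le (volume.restrict (Ioi (1:ℝ)))
        (fun t => ∫ s in Ioi (0 : ℝ), rho q1 q2 (t + u) s)
        (fun t => integral_nonneg fun s => hrho _ _)
      refine A.trans ?_
      have B : ∫⁻ t in Ioi (1:ℝ),
          ENNReal.ofReal (∫ s in Ioi (0 : ℝ), rho q1 q2 (t + u) s)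
          ≤ ∫⁻ t in Ioi (1:ℝ),
            ENNReal.ofReal (C2 * (1 + u) ^ γ) * ENNReal.ofReal (t ^ β) := by
        refine setLIntegral_mono' measurableSet_Ioi fun t ht => ?_
        have ht1 : (1:ℝ) < t := ht
        have htu : 0 < t + u := by linarith
        have ha : 0 < |t + u| ^ q1 := Real.rpow_pos_of_pos (abs_pos.2 htu.ne') _
        have step := (ofReal_int_le (volume.restrict (Ioi (0:ℝ)))
          (fun s => rho q1 q2 (t + u) s) (fun s => hrho _ _)).trans
          (innerS hq2' ha)
        refine step.trans ?_
        rw [← ENNReal.ofReal_mul (mul_nonneg hC2 (Real.rpow_nonneg (by positivity) _))]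
        refine ENNReal.ofReal_le_ofReal ?_
        have habs : |t + u| = t + u := abs_of_pos htu
        have hrw : (|t + u| ^ q1) ^ (1 / q2 - 1) = (t + u) ^ α := by
          rw [habs, ← Real.rpow_mul htu.le, hαdef]
        rw [hrw]
        have hsplit2 : (t + u) ^ α = (t + u) ^ β * (t + u) ^ γ := by
          rw [← Real.rpow_add htu, hβγ]
        rw [hsplit2]
        have hb1 : (t + u) ^ β ≤ t ^ β :=
          Real.rpow_le_rpow_of_nonpos (by linarith) (by linarith) (by linarith)
        have hb2 : (t + u) ^ γ ≤ (1 + u) ^ γ :=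
          Real.rpow_le_rpow_of_nonpos (by linarith) (by linarith) hγ0
        calc C2 * ((t + u) ^ β * (t + u) ^ γ)
            ≤ C2 * (t ^ β * (1 + u) ^ γ) := by
              refine mul_le_mul_of_nonneg_left ?_ hC2
              refine mul_le_mul hb1 hb2 (Real.rpow_nonneg htu.le _)
                (Real.rpow_nonneg (by linarith) _)
          _ = C2 * (1 + u) ^ γ * t ^ β := by ring
      refine B.trans ?_
      rw [lintegral_const_mul' _ _ ENNReal.ofReal_ne_top, lint_rpow hβ one_pos,
        ← hIβdef]
      refine le_of_eq ?_
      have hup : (0:ℝ) ≤ (1 + u) ^ γ := Real.rpow_nonneg (by linarith) _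
      rw [← ENNReal.ofReal_mul (mul_nonneg hC2 hup),
        ← ENNReal.ofReal_mul (mul_nonneg hC2 hIβ)]
      congr 1
      ring
    calc ENNReal.ofReal ((∫ t in Ioi (1 : ℝ), ∫ s in Ioi (0 : ℝ),
          rho q1 q2 (t + u) s) ^ 2)
        = (ENNReal.ofReal (∫ t in Ioi (1 : ℝ), ∫ s in Ioi (0 : ℝ),
          rho q1 q2 (t + u) s)) ^ 2 := ENNReal.ofReal_pow hFnn 2
      _ ≤ (ENNReal.ofReal (C2 * Iβ) * ENNReal.ofReal ((1 + u) ^ γ)) ^ 2 :=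
          pow_le_pow_left' step1 2
      _ = ENNReal.ofReal ((C2 * Iβ) ^ 2) * ENNReal.ofReal ((1 + u) ^ (γ + γ)) := by
          rw [mul_pow, ← ENNReal.ofReal_pow (mul_nonneg hC2 hIβ),
            ← ENNReal.ofReal_pow (Real.rpow_nonneg (by linarith) _)]
          congr 2
          rw [pow_two, ← Real.rpow_add (by linarith)]
  -- finiteness of the majorant
  have J : ∫⁻ u in Ioi (0:ℝ), ENNReal.ofReal ((1 + u) ^ (γ + γ)) < ⊤ := by
    have hsplit : Ioi (0:ℝ) = Ioc 0 1 ∪ Ioi 1 := (Ioc_union_Ioi_eq_Ioi zero_le_one).symm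
    rw [hsplit, lintegral_union measurableSet_Ioi Ioc_disjoint_Ioi_same]
    have p1 : ∫⁻ u in Ioc (0:ℝ) 1, ENNReal.ofReal ((1 + u) ^ (γ + γ))
        ≤ ∫⁻ _ in Ioc (0:ℝ) 1, (1:ENNReal) := by
      refine setLIntegral_mono' measurableSet_Ioc fun u hu => ?_
      have : (1 + u) ^ (γ + γ) ≤ 1 :=
        Real.rpow_le_one_of_one_le_of_nonpos (by linarith [hu.1]) (by linarith)
      simpa using ENNReal.ofReal_le_ofReal this
    have p2 : ∫⁻ u in Ioi (1:ℝ), ENNReal.ofReal ((1 + u) ^ (γ + γ))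
        ≤ ∫⁻ u in Ioi (1:ℝ), ENNReal.ofReal (u ^ (γ + γ)) := by
      refine setLIntegral_mono' measurableSet_Ioi fun u hu => ?_
      refine ENNReal.ofReal_le_ofReal ?_
      have hu1 : (1:ℝ) < u := hu
      exact Real.rpow_le_rpow_of_nonpos (by linarith) (by linarith) (by linarith)
    have f1 : (∫⁻ _ in Ioc (0:ℝ) 1, (1:ENNReal)) < ⊤ := by
      rw [setLIntegral_const]
      simp [Real.volume_Ioc]
    have f2 : ∫⁻ u in Ioi (1:ℝ), ENNReal.ofReal (u ^ (γ + γ)) < ⊤ := by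
      rw [lint_rpow hγ one_pos]
      exact ENNReal.ofReal_lt_top
    exact ENNReal.add_lt_top.2 ⟨lt_of_le_of_lt p1 f1, lt_of_le_of_lt p2 f2⟩
  calc ∫⁻ u in Ioi (0 : ℝ),
      ENNReal.ofReal ((∫ t in Ioi (1 : ℝ), ∫ s in Ioi (0 : ℝ),
        rho q1 q2 (t + u) s) ^ 2)
      ≤ ∫⁻ u in Ioi (0:ℝ),
        ENNReal.ofReal ((C2 * Iβ) ^ 2) * ENNReal.ofReal ((1 + u) ^ (γ + γ)) :=
        setLIntegral_mono' measurableSet_Ioi main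
    _ = ENNReal.ofReal ((C2 * Iβ) ^ 2) *
        ∫⁻ u in Ioi (0:ℝ), ENNReal.ofReal ((1 + u) ^ (γ + γ)) :=
        lintegral_const_mul' _ _ ENNReal.ofReal_ne_top
    _ < ⊤ := ENNReal.mul_lt_top ENNReal.ofReal_lt_top J
end

section
/- Suppose q1, q2 > 0 satisfy Q := 1/q1 + 1/q2 < 1 and Q_{edge,1} := 3/(2q1) + 1/q2 > 1. Then ∫₀^∞ ( ∫₀^1 ∫₀^∞ ρ(t+u,s) ds dt )² du < ∞, where ρ(t,s) = (|t|^{q1} + |s|^{q2})^{-1}. -/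
open MeasureTheory Real Set

-- general helper: ofReal of an integral is at most the lintegral of ofReal
lemma aux_ofReal_int_le {α : Type*} [MeasurableSpace α] {μ : Measure α} {f : α → ℝ}
    (hf : ∀ x, 0 ≤ f x) :
    ENNReal.ofReal (∫ x, f x ∂μ) ≤ ∫⁻ x, ENNReal.ofReal (f x) ∂μ := by
  by_cases h : Integrable f μ
  · exact le_of_eq (ofReal_integral_eq_lintegral_ofReal h (Filter.Eventually.of_forall hf))
  · rw [integral_undef h]; simp

lemma rho_nonneg (q1 q2 t s : ℝ) : 0 ≤ rho q1 q2 t s := by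
  unfold rho
  positivity

-- inner integral bound
lemma inner_bound (q1 q2 : ℝ) (hq1 : 0 < q1) (hq2 : 1 < q2) {x : ℝ} (hx : 0 < x) :
    ∫⁻ s in Ioi (0:ℝ), ENNReal.ofReal (rho q1 q2 x s)
      ≤ ENNReal.ofReal ((1 + 1/(q2-1)) * x ^ (-(q1*(1-1/q2)))) := by
  have hq2' : (0:ℝ) < q2 := by linarith
  set A : ℝ := x ^ (q1/q2) with hA_def
  have hA : 0 < A := rpow_pos_of_pos hx _
  have ha : 0 < x ^ q1 := rpow_pos_of_pos hx _
  have hsplit : Ioi (0:ℝ) = Ioc 0 A ∪ Ioi A := (Ioc_union_Ioi_eq_Ioi hA.le).symm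
  rw [hsplit, lintegral_union measurableSet_Ioi (Ioc_disjoint_Ioi le_rfl)]
  have h1 : ∫⁻ s in Ioc (0:ℝ) A, ENNReal.ofReal (rho q1 q2 x s)
      ≤ ENNReal.ofReal ((x ^ q1)⁻¹ * A) := by
    calc ∫⁻ s in Ioc (0:ℝ) A, ENNReal.ofReal (rho q1 q2 x s)
        ≤ ∫⁻ _ in Ioc (0:ℝ) A, ENNReal.ofReal ((x ^ q1)⁻¹) := by
          apply setLIntegral_mono' measurableSet_Ioc
          intro s _
          apply ENNReal.ofReal_le_ofReal
          unfold rho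
          rw [abs_of_pos hx]
          exact inv_anti₀ ha (le_add_of_nonneg_right (by positivity))
      _ = ENNReal.ofReal ((x ^ q1)⁻¹) * volume (Ioc (0:ℝ) A) := setLIntegral_const _ _
      _ = ENNReal.ofReal ((x ^ q1)⁻¹ * A) := by
          rw [Real.volume_Ioc, ENNReal.ofReal_mul (by positivity)]
          norm_num
  have h2 : ∫⁻ s in Ioi A, ENNReal.ofReal (rho q1 q2 x s)
      ≤ ENNReal.ofReal (A ^ (1-q2) / (q2-1)) := by
    calc ∫⁻ s in Ioi A, ENNReal.ofReal (rho q1 q2 x s)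
        ≤ ∫⁻ s in Ioi A, ENNReal.ofReal (s ^ (-q2)) := by
          apply setLIntegral_mono' measurableSet_Ioi
          intro s hs
          have hs0 : 0 < s := hA.trans hs
          apply ENNReal.ofReal_le_ofReal
          unfold rho
          rw [rpow_neg hs0.le, abs_of_pos hs0]
          exact inv_anti₀ (rpow_pos_of_pos hs0 _) (le_add_of_nonneg_left (by positivity))
      _ = ENNReal.ofReal (∫ s in Ioi A, s ^ (-q2)) := by
          refine (ofReal_integral_eq_lintegral_ofReal
            (integrableOn_Ioi_rpow_of_lt (by linarith) hA) ?_).symm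
          filter_upwards [ae_restrict_mem measurableSet_Ioi] with s hs
          exact rpow_nonneg (hA.trans hs).le _
      _ = ENNReal.ofReal (A ^ (1-q2) / (q2-1)) := by
          rw [integral_Ioi_rpow_of_lt (by linarith) hA]
          congr 1
          rw [show -q2 + 1 = 1 - q2 by ring,
            div_eq_div_iff (show (1:ℝ) - q2 < 0 by linarith).ne
              (show (0:ℝ) < q2 - 1 by linarith).ne']
          ring
  calc _ ≤ ENNReal.ofReal ((x ^ q1)⁻¹ * A) + ENNReal.ofReal (A ^ (1-q2) / (q2-1)) :=
        add_le_add h1 h2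
    _ = ENNReal.ofReal ((x ^ q1)⁻¹ * A + A ^ (1-q2) / (q2-1)) :=
        (ENNReal.ofReal_add (by positivity)
          (div_nonneg (rpow_nonneg hA.le _) (by linarith))).symm
    _ = ENNReal.ofReal ((1 + 1/(q2-1)) * x ^ (-(q1*(1-1/q2)))) := by
        congr 1
        have e1 : (x ^ q1)⁻¹ * A = x ^ (-(q1*(1-1/q2))) := by
          rw [hA_def, ← rpow_neg hx.le, ← rpow_add hx]
          congr 1
          field_simp
          ring
        have e2 : A ^ (1-q2) = x ^ (-(q1*(1-1/q2))) := by
          rw [hA_def, ← rpow_mul hx.le]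
          congr 1
          field_simp
          ring
        rw [e1, e2]
        ring

-- outer t-integral bound, valid for all u > 0
lemma outer_bound_all (α : ℝ) (hα : 1 < α) {u : ℝ} (hu : 0 < u) :
    ∫⁻ t in Ioc (0:ℝ) 1, ENNReal.ofReal ((t+u) ^ (-α))
      ≤ ENNReal.ofReal (u ^ (1-α) / (α-1)) := by
  have hcont : ContinuousOn (fun t : ℝ => (t+u) ^ (-α)) (Icc 0 1) := by
    apply ContinuousOn.rpow_const (by fun_prop)
    intro t ht
    exact Or.inl (by nlinarith [ht.1])
  have hint : IntegrableOn (fun t : ℝ => (t+u) ^ (-α)) (Ioc 0 1) :=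
    (hcont.integrableOn_Icc).mono_set Ioc_subset_Icc_self
  have hnn : 0 ≤ᵐ[volume.restrict (Ioc (0:ℝ) 1)] fun t : ℝ => (t+u) ^ (-α) := by
    filter_upwards [ae_restrict_mem measurableSet_Ioc] with t ht
    exact rpow_nonneg (by linarith [ht.1]) _
  rw [← ofReal_integral_eq_lintegral_ofReal hint hnn]
  apply ENNReal.ofReal_le_ofReal
  have hval : ∫ t in Ioc (0:ℝ) 1, (t+u) ^ (-α)
      = ((1+u) ^ (-α+1) - u ^ (-α+1)) / (-α+1) := by
    rw [← intervalIntegral.integral_of_le zero_le_one]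
    have := intervalIntegral.integral_comp_add_right (a := (0:ℝ)) (b := 1)
      (fun x : ℝ => x ^ (-α)) u
    rw [this, integral_rpow]
    · norm_num
    · right
      constructor
      · intro h; linarith
      · intro h
        rw [mem_uIcc] at h
        rcases h with ⟨h1, _⟩ | ⟨_, h2⟩ <;> linarith
  rw [hval]
  have h1 : (0:ℝ) < α - 1 := by linarith
  have h2 : (0:ℝ) ≤ (1+u) ^ (-α+1) := rpow_nonneg (by linarith) _
  have e : ((1+u) ^ (-α+1) - u ^ (-α+1)) / (-α+1)
      = (u ^ (-α+1) - (1+u) ^ (-α+1)) / (α-1) := by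
    rw [div_eq_div_iff (by linarith) (by linarith)]
    ring
  rw [e, show (1:ℝ) - α = -α + 1 by ring]
  exact (div_le_div_iff_of_pos_right h1).mpr (by linarith)

lemma split01 (F : ℝ → ENNReal) :
    ∫⁻ u in Ioi (0:ℝ), F u = (∫⁻ u in Ioc (0:ℝ) 1, F u) + ∫⁻ u in Ioi (1:ℝ), F u := by
  rw [← lintegral_union measurableSet_Ioi (Ioc_disjoint_Ioi le_rfl),
    Ioc_union_Ioi_eq_Ioi zero_le_one]

lemma outer_bound_large (α : ℝ) (hα : 0 < α) {u : ℝ} (hu : 1 ≤ u) :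
    ∫⁻ t in Ioc (0:ℝ) 1, ENNReal.ofReal ((t+u) ^ (-α)) ≤ ENNReal.ofReal (u ^ (-α)) := by
  calc ∫⁻ t in Ioc (0:ℝ) 1, ENNReal.ofReal ((t+u) ^ (-α))
      ≤ ∫⁻ _ in Ioc (0:ℝ) 1, ENNReal.ofReal (u ^ (-α)) := by
        apply setLIntegral_mono' measurableSet_Ioc
        intro t ht
        exact ENNReal.ofReal_le_ofReal
          (rpow_le_rpow_of_nonpos (by linarith) (by linarith [ht.1]) (by linarith))
    _ = ENNReal.ofReal (u ^ (-α)) * volume (Ioc (0:ℝ) 1) := setLIntegral_const _ _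
    _ = _ := by rw [Real.volume_Ioc]; norm_num

lemma pointwise_bound (q1 q2 : ℝ) (hq1 : 0 < q1) (hq2 : 1 < q2) {u : ℝ} (hu : 0 < u) :
    ENNReal.ofReal ((∫ t in Ioc (0:ℝ) 1, ∫ s in Ioi (0:ℝ), rho q1 q2 (t+u) s)^2)
      ≤ (ENNReal.ofReal (1 + 1/(q2-1))
          * ∫⁻ t in Ioc (0:ℝ) 1, ENNReal.ofReal ((t+u) ^ (-(q1*(1-1/q2)))))^2 := by
  have hCnn : (0:ℝ) ≤ 1 + 1/(q2-1) := by
    have h : (0:ℝ) < q2 - 1 := by linarith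
    positivity
  set g : ℝ → ℝ := fun t => ∫ s in Ioi (0:ℝ), rho q1 q2 (t+u) s with hg
  have hgnn : ∀ t, 0 ≤ g t := fun t => integral_nonneg fun s => rho_nonneg _ _ _ _
  have hInn : 0 ≤ ∫ t in Ioc (0:ℝ) 1, g t := integral_nonneg hgnn
  have key : ENNReal.ofReal (∫ t in Ioc (0:ℝ) 1, g t)
      ≤ ENNReal.ofReal (1 + 1/(q2-1))
        * ∫⁻ t in Ioc (0:ℝ) 1, ENNReal.ofReal ((t+u) ^ (-(q1*(1-1/q2)))) := by
    calc ENNReal.ofReal (∫ t in Ioc (0:ℝ) 1, g t)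
        ≤ ∫⁻ t in Ioc (0:ℝ) 1, ENNReal.ofReal (g t) := aux_ofReal_int_le hgnn
      _ ≤ ∫⁻ t in Ioc (0:ℝ) 1,
            ENNReal.ofReal ((1 + 1/(q2-1)) * (t+u) ^ (-(q1*(1-1/q2)))) := by
          apply setLIntegral_mono' measurableSet_Ioc
          intro t ht
          calc ENNReal.ofReal (g t)
              ≤ ∫⁻ s in Ioi (0:ℝ), ENNReal.ofReal (rho q1 q2 (t+u) s) :=
                aux_ofReal_int_le (fun s => rho_nonneg _ _ _ _)
            _ ≤ _ := inner_bound q1 q2 hq1 hq2 (by linarith [ht.1])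
      _ = _ := by
          simp_rw [ENNReal.ofReal_mul hCnn]
          rw [lintegral_const_mul' _ _ ENNReal.ofReal_ne_top]
  rw [ENNReal.ofReal_pow hInn]
  exact pow_le_pow_left' key 2

theorem stmt_3 (q1 q2 : ℝ) (hq1 : 0 < q1) (hq2 : 0 < q2)
    (hQ : 1 / q1 + 1 / q2 < 1) (hE : 1 < 3 / (2 * q1) + 1 / q2) :
    ∫⁻ u in Ioi (0 : ℝ),
      ENNReal.ofReal ((∫ t in Ioc (0 : ℝ) 1, ∫ s in Ioi (0 : ℝ),
        rho q1 q2 (t + u) s) ^ 2) < ⊤ := by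
  set α : ℝ := q1 * (1 - 1/q2) with hα_def
  set C : ℝ := 1 + 1/(q2-1) with hC_def
  have hq2' : 1 < q2 := by
    have h0 : 0 < 1/q1 := by positivity
    exact (div_lt_one hq2).mp (by linarith)
  have hq21 : (0:ℝ) < q2 - 1 := by linarith
  have hCnn : (0:ℝ) ≤ C := by rw [hC_def]; positivity
  have hα1 : 1 < α := by
    have h1 : 1/q1 < 1 - 1/q2 := by linarith
    have := (div_lt_iff₀' hq1).mp h1
    linarith
  have hα32 : α < 3/2 := by
    have h2 : 1 - 1/q2 < 3/2/q1 := by rw [div_div]; linarith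
    have := (lt_div_iff₀ hq1).mp h2
    nlinarith
  have hα0 : 0 < α := by linarith
  have key : ∀ u : ℝ, 0 < u →
      ENNReal.ofReal ((∫ t in Ioc (0:ℝ) 1, ∫ s in Ioi (0:ℝ), rho q1 q2 (t+u) s)^2)
        ≤ (ENNReal.ofReal C * ∫⁻ t in Ioc (0:ℝ) 1, ENNReal.ofReal ((t+u) ^ (-α)))^2 :=
    fun u hu => pointwise_bound q1 q2 hq1 hq2' hu
  rw [split01, ENNReal.add_lt_top]
  constructor
  · -- small u
    have hstep : ∫⁻ u in Ioc (0:ℝ) 1,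
        ENNReal.ofReal ((∫ t in Ioc (0:ℝ) 1, ∫ s in Ioi (0:ℝ), rho q1 q2 (t+u) s)^2)
        ≤ ∫⁻ u in Ioc (0:ℝ) 1,
            ENNReal.ofReal (C^2/(α-1)^2) * ENNReal.ofReal (u ^ (2-2*α)) := by
      apply setLIntegral_mono' measurableSet_Ioc
      intro u hu
      refine (key u hu.1).trans ?_
      have step2 : (ENNReal.ofReal C * ∫⁻ t in Ioc (0:ℝ) 1,
            ENNReal.ofReal ((t+u) ^ (-α)))^2
          ≤ (ENNReal.ofReal C * ENNReal.ofReal (u ^ (1-α)/(α-1)))^2 := by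
        gcongr
        exact outer_bound_all α hα1 hu.1
      refine step2.trans (le_of_eq ?_)
      rw [← ENNReal.ofReal_mul hCnn,
        ← ENNReal.ofReal_pow (mul_nonneg hCnn
          (div_nonneg (rpow_nonneg hu.1.le _) (by linarith))),
        ← ENNReal.ofReal_mul (by positivity)]
      congr 1
      have hsq : (u ^ (1-α))^2 = u ^ (2-2*α) := by
        rw [← rpow_natCast (u ^ (1-α)) 2, ← rpow_mul hu.1.le]
        norm_num
        ring_nf
      rw [mul_pow, div_pow, hsq]
      ring
    refine lt_of_le_of_lt hstep ?_
    rw [lintegral_const_mul' _ _ ENNReal.ofReal_ne_top]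
    apply ENNReal.mul_lt_top ENNReal.ofReal_lt_top
    have hint : IntegrableOn (fun u : ℝ => u ^ (2-2*α)) (Ioo 0 1) :=
      (intervalIntegral.integrableOn_Ioo_rpow_iff one_pos).mpr (by linarith)
    rw [← Measure.restrict_congr_set Ioo_ae_eq_Ioc,
      ← ofReal_integral_eq_lintegral_ofReal hint ?_]
    · exact ENNReal.ofReal_lt_top
    · filter_upwards [ae_restrict_mem measurableSet_Ioo] with x hx
      exact rpow_nonneg hx.1.le _
  · -- large u
    have hstep : ∫⁻ u in Ioi (1:ℝ),
        ENNReal.ofReal ((∫ t in Ioc (0:ℝ) 1, ∫ s in Ioi (0:ℝ), rho q1 q2 (t+u) s)^2)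
        ≤ ∫⁻ u in Ioi (1:ℝ),
            ENNReal.ofReal (C^2) * ENNReal.ofReal (u ^ (-(2*α))) := by
      apply setLIntegral_mono' measurableSet_Ioi
      intro u hu
      have hu0 : (0:ℝ) < u := lt_trans one_pos hu
      refine (key u hu0).trans ?_
      have step2 : (ENNReal.ofReal C * ∫⁻ t in Ioc (0:ℝ) 1,
            ENNReal.ofReal ((t+u) ^ (-α)))^2
          ≤ (ENNReal.ofReal C * ENNReal.ofReal (u ^ (-α)))^2 := by
        gcongr
        exact outer_bound_large α hα0 hu.le
      refine step2.trans (le_of_eq ?_)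
      rw [← ENNReal.ofReal_mul hCnn,
        ← ENNReal.ofReal_pow (mul_nonneg hCnn (rpow_nonneg hu0.le _)),
        ← ENNReal.ofReal_mul (by positivity)]
      congr 1
      have hsq : (u ^ (-α))^2 = u ^ (-(2*α)) := by
        rw [← rpow_natCast (u ^ (-α)) 2, ← rpow_mul hu0.le]
        norm_num
        ring_nf
      rw [mul_pow, hsq]
    refine lt_of_le_of_lt hstep ?_
    rw [lintegral_const_mul' _ _ ENNReal.ofReal_ne_top]
    apply ENNReal.mul_lt_top ENNReal.ofReal_lt_top
    have hint : IntegrableOn (fun u : ℝ => u ^ (-(2*α))) (Ioi 1) :=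
      integrableOn_Ioi_rpow_of_lt (by linarith) one_pos
    rw [← ofReal_integral_eq_lintegral_ofReal hint ?_]
    · exact ENNReal.ofReal_lt_top
    · filter_upwards [ae_restrict_mem measurableSet_Ioi] with x hx
      exact rpow_nonneg (lt_trans one_pos hx).le _
end

section
/- Suppose q1, q2 > 0 satisfy Q := 1/q1 + 1/q2 < 1 and Q_{edge,1} := 3/(2q1) + 1/q2 > 1. Then ∫₀^∞ ∫₀^1 ( ∫₀^1 ∫₀^1 ρ(t+u, s−v) ds dt )² dv du < ∞, where ρ(t,s) = (|t|^{q1} + |s|^{q2})^{-1}. -/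
open MeasureTheory Real Set

lemma one_add_abs_rpow_le {q : ℝ} (hq : 0 ≤ q) (x : ℝ) :
    (1 + |x|) ^ q ≤ 2 ^ q * (1 + |x| ^ q) := by
  have hxq : 0 ≤ |x| ^ q := by positivity
  rcases le_total |x| 1 with hx | hx
  · calc (1 + |x|) ^ q ≤ 2 ^ q := rpow_le_rpow (by positivity) (by linarith) hq
      _ ≤ 2 ^ q * (1 + |x| ^ q) := le_mul_of_one_le_right (by positivity) (by linarith)
  · calc (1 + |x|) ^ q ≤ (2 * |x|) ^ q := rpow_le_rpow (by positivity) (by linarith) hq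
      _ = 2 ^ q * |x| ^ q := mul_rpow zero_le_two (abs_nonneg x)
      _ ≤ 2 ^ q * (1 + |x| ^ q) := by gcongr; linarith

lemma integrable_inv_one_add_abs_rpow {q : ℝ} (hq : 1 < q) :
    Integrable (fun x : ℝ => (1 + |x| ^ q)⁻¹) := by
  have hdom : Integrable (fun x : ℝ => 2 ^ q * (1 + ‖x‖) ^ (-q)) :=
    (integrable_one_add_norm (by simpa using hq)).const_mul _
  refine hdom.mono' ?_ (Filter.Eventually.of_forall fun x => ?_)
  · exact (continuous_const.add (continuous_abs.rpow_const fun _ => Or.inr (by linarith))).inv₀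
      (fun x => (add_pos_of_pos_of_nonneg one_pos (by positivity)).ne') |>.aestronglyMeasurable
  · rw [Real.norm_eq_abs, abs_of_pos (by positivity), Real.norm_eq_abs,
      rpow_neg (by positivity), ← div_eq_mul_inv, le_div_iff₀ (by positivity),
      inv_mul_le_iff₀ (by positivity), mul_comm]
    exact one_add_abs_rpow_le (by linarith) x

lemma inv_add_abs_rpow_eq {q A : ℝ} (hq : q ≠ 0) (hA : 0 < A) (x : ℝ) :
    (A + |x| ^ q)⁻¹ = A⁻¹ * (1 + |(A ^ (1 / q))⁻¹ * x| ^ q)⁻¹ := by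
  rw [abs_mul, abs_inv, abs_of_pos (rpow_pos_of_pos hA _), mul_rpow (by positivity) (abs_nonneg x),
    inv_rpow (by positivity), ← rpow_mul hA.le, one_div_mul_cancel hq, rpow_one, ← mul_inv]
  congr 1
  field_simp

lemma integrable_inv_add_abs_rpow {q A : ℝ} (hq : 1 < q) (hA : 0 < A) :
    Integrable (fun x : ℝ => (A + |x| ^ q)⁻¹) := by
  simp_rw [inv_add_abs_rpow_eq (by linarith : q ≠ 0) hA]
  exact ((integrable_inv_one_add_abs_rpow hq).comp_mul_left' (by positivity)).const_mul _

lemma integral_inv_add_abs_rpow {q A : ℝ} (hq : q ≠ 0) (hA : 0 < A) :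
    ∫ x, (A + |x| ^ q)⁻¹ = A ^ (1 / q - 1) * ∫ x, (1 + |x| ^ q)⁻¹ := by
  simp_rw [inv_add_abs_rpow_eq hq hA]
  rw [integral_const_mul, Measure.integral_comp_mul_left (fun x => (1 + |x| ^ q)⁻¹),
    inv_inv, abs_of_pos (by positivity), smul_eq_mul, rpow_sub hA, rpow_one]
  ring

lemma setIntegral_rho_sub_le {q1 q2 x : ℝ} (hq2 : 1 < q2) (hx : x ≠ 0) (v : ℝ) :
    ∫ s in Ioc 0 1, rho q1 q2 x (s - v) ≤
      |x| ^ (q1 * (1 / q2 - 1)) * ∫ w, (1 + |w| ^ q2)⁻¹ := by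
  have hA : 0 < |x| ^ q1 := rpow_pos_of_pos (abs_pos.mpr hx) _
  calc ∫ s in Ioc 0 1, rho q1 q2 x (s - v) ≤ ∫ s, rho q1 q2 x (s - v) :=
        setIntegral_le_integral ((integrable_inv_add_abs_rpow hq2 hA).comp_sub_right v)
          (Filter.Eventually.of_forall fun s => rho_nonneg _ _ _ _)
    _ = ∫ w, (|x| ^ q1 + |w| ^ q2)⁻¹ := integral_sub_right_eq_self (fun w => rho q1 q2 x w) v
    _ = |x| ^ (q1 * (1 / q2 - 1)) * ∫ w, (1 + |w| ^ q2)⁻¹ := by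
        rw [integral_inv_add_abs_rpow (by linarith) hA, rpow_mul (abs_nonneg x)]

lemma integral_rho_le {q1 q2 u : ℝ} (hq2 : 1 < q2) (hu : 0 < u) (v : ℝ) :
    ∫ t in Ioc 0 1, ∫ s in Ioc 0 1, rho q1 q2 (t + u) (s - v) ≤
      (∫ w, (1 + |w| ^ q2)⁻¹) * ∫ t in Ioc 0 1, (t + u) ^ (q1 * (1 / q2 - 1)) := by
  have hcont : ContinuousOn (fun t : ℝ => (t + u) ^ (q1 * (1 / q2 - 1))) (Icc 0 1) :=
    (continuousOn_id.add continuousOn_const).rpow_const fun t ht =>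
      Or.inl (by linarith [ht.1] : 0 < t + u).ne'
  rw [← integral_const_mul]
  refine integral_mono_of_nonneg
    (Filter.Eventually.of_forall fun t => integral_nonneg fun s => rho_nonneg _ _ _ _)
    ((hcont.integrableOn_Icc.mono_set Ioc_subset_Icc_self).const_mul _)
    ((ae_restrict_iff' measurableSet_Ioc).2 (Filter.Eventually.of_forall fun t ht => ?_))
  have htu : 0 < t + u := by linarith [ht.1]
  have h := setIntegral_rho_sub_le (q1 := q1) hq2 htu.ne' v
  rwa [abs_of_pos htu, mul_comm] at h

lemma setIntegral_Ioc_add_rpow_le_of_lt {a u : ℝ} (ha : a < -1) (hu : 0 < u) :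
    ∫ t in Ioc 0 1, (t + u) ^ a ≤ u ^ (a + 1) / -(a + 1) := by
  calc ∫ t in Ioc 0 1, (t + u) ^ a = ∫ x in Ioc u (1 + u), x ^ a := by
        rw [← intervalIntegral.integral_of_le zero_le_one,
          intervalIntegral.integral_comp_add_right (fun x => x ^ a) u, zero_add,
          intervalIntegral.integral_of_le (by linarith)]
    _ ≤ ∫ x in Ioi u, x ^ a :=
        setIntegral_mono_set (integrableOn_Ioi_rpow_of_lt ha hu)
          ((ae_restrict_iff' measurableSet_Ioi).2 (Filter.Eventually.of_forall fun x hx =>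
            rpow_nonneg (hu.trans hx).le a))
          Ioc_subset_Ioi_self.eventuallyLE
    _ = u ^ (a + 1) / -(a + 1) := by rw [integral_Ioi_rpow_of_lt ha hu, div_neg, neg_div]

lemma setIntegral_Ioc_add_rpow_le {a u : ℝ} (ha : a ≤ 0) (hu : 0 < u) :
    ∫ t in Ioc 0 1, (t + u) ^ a ≤ u ^ a := by
  have h := norm_setIntegral_le_of_norm_le_const (μ := volume) (s := Ioc (0 : ℝ) 1)
    (f := fun t => (t + u) ^ a) (C := u ^ a) (by simp) fun t ht => by
      rw [Real.norm_eq_abs, abs_of_nonneg (rpow_nonneg (by linarith [ht.1]) a)]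
      exact rpow_le_rpow_of_nonpos hu (by linarith [ht.1]) ha
  simpa using (le_abs_self _).trans h

lemma setLIntegral_Ioi_ofReal_lt_top {f : ℝ → ℝ} {α β C₀ C₁ : ℝ} (hα : -1 < α) (hβ : β < -1)
    (h₀ : ∀ u ∈ Ioc 0 1, f u ≤ C₀ * u ^ α) (h₁ : ∀ u ∈ Ioi 1, f u ≤ C₁ * u ^ β) :
    ∫⁻ u in Ioi 0, ENNReal.ofReal (f u) < ⊤ := by
  rw [← Ioc_union_Ioi_eq_Ioi zero_le_one, lintegral_union measurableSet_Ioi Ioc_disjoint_Ioi_same,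
    ENNReal.add_lt_top]
  constructor
  · refine (setLIntegral_mono' measurableSet_Ioc fun u hu =>
      ENNReal.ofReal_le_ofReal (h₀ u hu)).trans_lt ?_
    exact (((intervalIntegral.intervalIntegrable_rpow' hα).1).const_mul C₀).lintegral_lt_top
  · refine (setLIntegral_mono' measurableSet_Ioi fun u hu =>
      ENNReal.ofReal_le_ofReal (h₁ u hu)).trans_lt ?_
    exact ((integrableOn_Ioi_rpow_of_lt hβ one_pos).const_mul C₁).lintegral_lt_top

lemma setLIntegral_Ioc_ofReal_sq_integral_rho_le {q1 q2 u : ℝ} (hq2 : 1 < q2) (hu : 0 < u) :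
    ∫⁻ v in Ioc 0 1, ENNReal.ofReal ((∫ t in Ioc 0 1, ∫ s in Ioc 0 1,
        rho q1 q2 (t + u) (s - v)) ^ 2) ≤
      ENNReal.ofReal (((∫ w, (1 + |w| ^ q2)⁻¹) *
        ∫ t in Ioc 0 1, (t + u) ^ (q1 * (1 / q2 - 1))) ^ 2) := by
  calc _ ≤ ∫⁻ _ in Ioc (0 : ℝ) 1, ENNReal.ofReal (((∫ w, (1 + |w| ^ q2)⁻¹) *
        ∫ t in Ioc 0 1, (t + u) ^ (q1 * (1 / q2 - 1))) ^ 2) :=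
        setLIntegral_mono' measurableSet_Ioc fun v _ => ENNReal.ofReal_le_ofReal <|
          pow_le_pow_left₀ (integral_nonneg fun t => integral_nonneg fun s => rho_nonneg _ _ _ _)
            (integral_rho_le hq2 hu v) 2
    _ = _ := by simp

theorem stmt_5 (q1 q2 : ℝ) (hq1 : 0 < q1) (hq2 : 0 < q2)
    (hQ : 1 / q1 + 1 / q2 < 1) (hE : 1 < 3 / (2 * q1) + 1 / q2) :
    ∫⁻ u in Ioi (0 : ℝ), ∫⁻ v in Ioc (0 : ℝ) 1,
      ENNReal.ofReal ((∫ t in Ioc (0 : ℝ) 1, ∫ s in Ioc (0 : ℝ) 1,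
        rho q1 q2 (t + u) (s - v)) ^ 2) < ⊤ := by
  have hq2' : 1 < q2 := by
    have h : 1 / q2 < 1 := by linarith [one_div_pos.mpr hq1]
    rwa [div_lt_one hq2] at h
  set a := q1 * (1 / q2 - 1) with ha_def
  have ha : a + 1 < 0 := by
    have h : a + 1 = q1 * (1 / q1 + 1 / q2 - 1) := by rw [ha_def]; field_simp; ring
    rw [h]; exact mul_neg_of_pos_of_neg hq1 (by linarith)
  have ha' : 0 < a + 3 / 2 := by
    have h : a + 3 / 2 = q1 * (3 / (2 * q1) + 1 / q2 - 1) := by rw [ha_def]; field_simp; ring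
    rw [h]; exact mul_pos hq1 (by linarith)
  set c : ℝ := ∫ w : ℝ, (1 + |w| ^ q2)⁻¹
  have hc : 0 ≤ c := integral_nonneg fun w => by positivity
  have hmajorant_nonneg : ∀ u, 0 < u → 0 ≤ c * ∫ t in Ioc 0 1, (t + u) ^ a := fun u hu =>
    mul_nonneg hc <| setIntegral_nonneg measurableSet_Ioc fun t ht =>
      rpow_nonneg (by linarith [ht.1]) a
  refine (setLIntegral_mono' measurableSet_Ioi fun u hu =>
    setLIntegral_Ioc_ofReal_sq_integral_rho_le hq2' hu).trans_lt ?_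
  refine setLIntegral_Ioi_ofReal_lt_top (α := (a + 1) * 2) (β := a * 2)
    (C₀ := (c / -(a + 1)) ^ 2) (C₁ := c ^ 2) (by linarith) (by linarith)
    (fun u hu => ?_) (fun u hu => ?_)
  · rw [rpow_mul hu.1.le, rpow_two, ← mul_pow, mul_comm_div]
    exact pow_le_pow_left₀ (hmajorant_nonneg u hu.1) (mul_le_mul_of_nonneg_left
      (setIntegral_Ioc_add_rpow_le_of_lt (by linarith) hu.1) hc) 2
  · have hu0 : 0 < u := zero_lt_one.trans hu
    rw [rpow_mul hu0.le, rpow_two, ← mul_pow]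
    exact pow_le_pow_left₀ (hmajorant_nonneg u hu0) (mul_le_mul_of_nonneg_left
      (setIntegral_Ioc_add_rpow_le (by linarith) hu0) hc) 2
end

section
/- Suppose q1, q2 > 0 satisfy Q := 1/q1 + 1/q2 < 1, Q_{edge,1} := 3/(2q1) + 1/q2 > 1 and Q_{edge,2} := 1/q1 + 3/(2q2) > 1. Then ∫_{ℝ² \setminus [0,1]²} ( ∫_{[0,1]²} ρ(t−u, s−v) dt ds )² du dv < ∞, where ρ(t,s) = (|t|^{q1} + |s|^{q2})^{-1}. -/
/-!
For weights with `α / q1 + β / q2 = 1`, weighted AM-GM gives `ρ(x, y) ≤ |x|^(-α) |y|^(-β)`, so the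
inner integral is at most `A_α(u) A_β(v)`, where `A_γ(u) = ∫₀¹ |t - u|^(-γ) dt`. The complement of
the square lies in `{u ∉ [0,1]} ∪ {v ∉ [0,1]}`, and over `{u ∉ [0,1]}` the bound factorises into
`∫_{u ∉ [0,1]} A_α² · ∫_ℝ A_β²`. Since `A_γ(u)` is of order `dist(u, [0,1])^(1-γ)` near the
interval when `γ > 1`, is bounded when `γ < 1`, and decays like `|u|^(-γ)`, the first factor is
finite for `1 < α < 3/2` and the second for `1/2 < β < 1`. Such a pair exists because `Q < 1` and
`Q_{edge,1} > 1`; on `{v ∉ [0,1]}` the roles of the variables are exchanged, using `Q_{edge,2} > 1`.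
-/

open MeasureTheory Real Set

open scoped ENNReal

lemma rho_le_rpow_mul_rpow {q1 q2 α β x y : ℝ} (hq1 : 0 < q1) (hq2 : 0 < q2) (hα : 0 ≤ α)
    (hβ : 0 ≤ β) (hαβ : α / q1 + β / q2 = 1) (hx : x ≠ 0) (hy : y ≠ 0) :
    rho q1 q2 x y ≤ |x| ^ (-α) * |y| ^ (-β) := by
  have hX : 0 ≤ |x| ^ q1 := by positivity
  have hY : 0 ≤ |y| ^ q2 := by positivity
  have hs : 0 ≤ α / q1 := by positivity
  have ht : 0 ≤ β / q2 := by positivity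
  have key : |x| ^ α * |y| ^ β ≤ |x| ^ q1 + |y| ^ q2 := calc
    |x| ^ α * |y| ^ β = (|x| ^ q1) ^ (α / q1) * (|y| ^ q2) ^ (β / q2) := by
      rw [← rpow_mul (abs_nonneg x), ← rpow_mul (abs_nonneg y), mul_div_cancel₀ _ hq1.ne',
        mul_div_cancel₀ _ hq2.ne']
    _ ≤ α / q1 * |x| ^ q1 + β / q2 * |y| ^ q2 :=
      geom_mean_le_arith_mean2_weighted hs ht hX hY hαβ
    _ ≤ |x| ^ q1 + |y| ^ q2 := by nlinarith [mul_nonneg hs hY, mul_nonneg ht hX]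
  rw [rho, rpow_neg (abs_nonneg x), rpow_neg (abs_nonneg y), ← mul_inv]
  exact inv_anti₀ (by positivity) key

lemma ofReal_rho_le {q1 q2 α β : ℝ} (hq1 : 0 < q1) (hq2 : 0 < q2) (hα : 0 < α) (hβ : 0 < β)
    (hαβ : α / q1 + β / q2 = 1) (x y : ℝ) :
    ENNReal.ofReal (rho q1 q2 x y) ≤ ENNReal.ofReal |x| ^ (-α) * ENNReal.ofReal |y| ^ (-β) := by
  rcases eq_or_ne x 0 with rfl | hx
  · rw [abs_zero, ENNReal.ofReal_zero, ENNReal.zero_rpow_of_neg (neg_lt_zero.2 hα),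
      ENNReal.top_mul (by simp [ENNReal.rpow_eq_zero_iff, hβ, hβ.le])]
    exact le_top
  rcases eq_or_ne y 0 with rfl | hy
  · rw [abs_zero, ENNReal.ofReal_zero, ENNReal.zero_rpow_of_neg (neg_lt_zero.2 hβ),
      ENNReal.mul_top (by simp [ENNReal.rpow_eq_zero_iff, hα, hα.le])]
    exact le_top
  rw [ENNReal.ofReal_rpow_of_pos (abs_pos.2 hx), ENNReal.ofReal_rpow_of_pos (abs_pos.2 hy),
    ← ENNReal.ofReal_mul (by positivity)]
  exact ENNReal.ofReal_le_ofReal (rho_le_rpow_mul_rpow hq1 hq2 hα.le hβ.le hαβ hx hy)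

lemma exists_split_exponents {q1 q2 : ℝ} (hq1 : 0 < q1) (hq2 : 0 < q2) (hQ : 1 / q1 + 1 / q2 < 1)
    (hE : 1 < 3 / (2 * q1) + 1 / q2) :
    ∃ α β : ℝ, α / q1 + β / q2 = 1 ∧ 1 < α ∧ α < 3 / 2 ∧ 1 / 2 < β ∧ β < 1 := by
  have h1 : 0 < 1 / q1 := by positivity
  have h2 : 0 < 1 / q2 := by positivity
  have e1 : 3 / (2 * q1) = 3 / 2 * (1 / q1) := by ring
  obtain ⟨s, hs, hs'⟩ : ∃ s, max (1 / q1) (1 - 1 / q2) < s ∧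
      s < min (3 / 2 * (1 / q1)) (1 - 1 / 2 * (1 / q2)) :=
    exists_between <|
      max_lt (lt_min (by linarith) (by linarith)) (lt_min (by linarith) (by linarith))
  rw [max_lt_iff] at hs
  rw [lt_min_iff] at hs'
  have c1 := mul_one_div_cancel hq1.ne'
  have c2 := mul_one_div_cancel hq2.ne'
  refine ⟨s * q1, (1 - s) * q2, by field_simp; ring, ?_, ?_, ?_, ?_⟩ <;> nlinarith

section

variable {γ p : ℝ}

lemma lintegral_abs_rpow_neg_lt_top (hγ : γ < 1) {K : Set ℝ} (hK : IsCompact K) :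
    ∫⁻ r in K, ENNReal.ofReal |r| ^ (-γ) < ⊤ := by
  have hloc : LocallyIntegrable (fun r : ℝ => |r| ^ (-γ)) :=
    locallyIntegrable_of_norm_le_rpow (α := γ) (C := 1) (by simp) (by simpa using hγ)
      (ae_of_all _ fun r => by simp [abs_of_nonneg (rpow_nonneg (abs_nonneg r) _)])
      (continuous_abs.measurable.pow_const _).aestronglyMeasurable
  refine lt_of_eq_of_lt (lintegral_congr_ae ?_) ((hloc.integrableOn_isCompact hK).lintegral_lt_top)
  filter_upwards [ae_restrict_of_ae (measure_eq_zero_iff_ae_notMem.1 (measure_singleton (0 : ℝ)))]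
    with r hr
  exact ENNReal.ofReal_rpow_of_pos (abs_pos.2 hr)

lemma lintegral_Ioc_rpow_neg_lt_top (hp : p < 1) :
    ∫⁻ d in Ioc (0 : ℝ) 1, ENNReal.ofReal d ^ (-p) < ⊤ := by
  rw [setLIntegral_congr_fun (g := fun d => ENNReal.ofReal |d| ^ (-p)) measurableSet_Ioc
    fun d hd => by simp only [abs_of_pos hd.1]]
  exact (lintegral_mono_set Ioc_subset_Icc_self).trans_lt
    (lintegral_abs_rpow_neg_lt_top hp isCompact_Icc)

lemma lintegral_Ioi_rpow_neg_lt_top (hp : 1 < p) :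
    ∫⁻ d in Ioi (1 : ℝ), ENNReal.ofReal d ^ (-p) < ⊤ := by
  rw [setLIntegral_congr_fun (g := fun d => ENNReal.ofReal (d ^ (-p))) measurableSet_Ioi
    fun d hd => ENNReal.ofReal_rpow_of_pos (zero_lt_one.trans hd)]
  exact (integrableOn_Ioi_rpow_of_lt (by linarith) zero_lt_one).lintegral_lt_top

end

noncomputable def intervalPotential (γ u : ℝ) : ℝ≥0∞ :=
  ∫⁻ t in Icc (0 : ℝ) 1, ENNReal.ofReal |t - u| ^ (-γ)

namespace intervalPotential

variable {γ θ d : ℝ}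

lemma measurable (γ : ℝ) : Measurable (intervalPotential γ) :=
  Measurable.lintegral_prod_right (by fun_prop)

@[simp] lemma zero_left (u : ℝ) : intervalPotential 0 u = 1 := by
  simp [intervalPotential]

lemma one_sub (γ u : ℝ) : intervalPotential γ (1 - u) = intervalPotential γ u := by
  have h := (volume.measurePreserving_sub_left (1 : ℝ)).setLIntegral_comp_preimage_emb
    (MeasurableEquiv.subLeft (1 : ℝ)).measurableEmbedding
    (fun t => ENNReal.ofReal |t - u| ^ (-γ)) (Icc 0 1)
  rw [preimage_const_sub_Icc, sub_zero, sub_self] at h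
  rw [intervalPotential, intervalPotential, ← h]
  refine lintegral_congr fun t => ?_
  rw [← abs_neg]
  ring_nf

lemma exists_le_of_lt_one (hγ : γ < 1) :
    ∃ C < ⊤, ∀ u ∈ Icc (-1 : ℝ) 1, intervalPotential γ u ≤ C := by
  refine ⟨_, lintegral_abs_rpow_neg_lt_top hγ (isCompact_Icc (a := -1) (b := 2)), fun u hu => ?_⟩
  have h := (measurePreserving_sub_right volume u).setLIntegral_comp_preimage_emb
    (MeasurableEquiv.subRight u).measurableEmbedding
    (fun r => ENNReal.ofReal |r| ^ (-γ)) (Icc (-1) 2)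
  refine (lintegral_mono_set fun t ht => ?_).trans h.le
  simp only [mem_preimage, mem_Icc] at ht hu ⊢
  constructor <;> linarith [ht.1, ht.2, hu.1, hu.2]

lemma neg_le_rpow_mul (hd : 0 < d) (hθ : 0 ≤ θ) :
    intervalPotential γ (-d) ≤ ENNReal.ofReal d ^ (-θ) * intervalPotential (γ - θ) (-d) := by
  rw [intervalPotential, intervalPotential, ← lintegral_const_mul _ (by fun_prop)]
  refine setLIntegral_mono (by fun_prop) fun t ht => ?_
  have hdt : d ≤ |t - -d| := by
    rw [sub_neg_eq_add, abs_of_pos (by linarith [ht.1])]; linarith [ht.1]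
  have hpos : ENNReal.ofReal |t - -d| ≠ 0 := by simpa using hd.trans_le hdt
  calc ENNReal.ofReal |t - -d| ^ (-γ)
      = ENNReal.ofReal |t - -d| ^ (-θ) * ENNReal.ofReal |t - -d| ^ (-(γ - θ)) := by
        rw [← ENNReal.rpow_add _ _ hpos ENNReal.ofReal_ne_top]; ring_nf
    _ ≤ ENNReal.ofReal d ^ (-θ) * ENNReal.ofReal |t - -d| ^ (-(γ - θ)) := by
        rw [ENNReal.rpow_neg, ENNReal.rpow_neg (ENNReal.ofReal d)]
        gcongr

lemma sq_neg_le_rpow (hd : 0 < d) (hγ : 0 ≤ γ) :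
    intervalPotential γ (-d) ^ 2 ≤ ENNReal.ofReal d ^ (-(γ * 2)) := calc
  intervalPotential γ (-d) ^ 2
      ≤ (ENNReal.ofReal d ^ (-γ) * intervalPotential (γ - γ) (-d)) ^ 2 := by
    gcongr; exact neg_le_rpow_mul hd hγ
  _ = ENNReal.ofReal d ^ (-(γ * 2)) := by
    rw [sub_self, zero_left, mul_one, ← ENNReal.rpow_mul_natCast]; norm_num

lemma lintegral_Iio_sq_lt_top (h1 : 1 / 2 < γ) (h2 : γ < 3 / 2) :
    ∫⁻ u in Iio 0, intervalPotential γ u ^ 2 < ⊤ := by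
  -- Near the interval, trade a factor `d^(-θ)` for the exponent `γ - θ < 1`, at which `A` is
  -- bounded; `θ < 1/2` keeps `d^(-2θ)` integrable.
  obtain ⟨θ, hθ, hθ'⟩ : ∃ θ, max 0 (γ - 1) < θ ∧ θ < 1 / 2 :=
    exists_between (max_lt (by norm_num) (by linarith))
  rw [max_lt_iff] at hθ
  obtain ⟨C, hC, hAC⟩ := exists_le_of_lt_one (γ := γ - θ) (by linarith)
  have hneg := (Measure.measurePreserving_neg volume).setLIntegral_comp_preimage_emb
    measurableEmbedding_neg (fun u => intervalPotential γ u ^ 2) (Iio 0)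
  rw [← hneg, show Neg.neg ⁻¹' Iio (0 : ℝ) = Ioi 0 by simp, ← Ioc_union_Ioi_eq_Ioi zero_le_one]
  refine (lintegral_union_le _ _ _).trans_lt (ENNReal.add_lt_top.2 ⟨?_, ?_⟩)
  · have hle : ∀ d ∈ Ioc (0 : ℝ) 1,
        intervalPotential γ (-d) ^ 2 ≤ ENNReal.ofReal d ^ (-(θ * 2)) * C ^ 2 := fun d hd => calc
      intervalPotential γ (-d) ^ 2
          ≤ (ENNReal.ofReal d ^ (-θ) * intervalPotential (γ - θ) (-d)) ^ 2 := by
        gcongr; exact neg_le_rpow_mul hd.1 hθ.1.le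
      _ ≤ (ENNReal.ofReal d ^ (-θ) * C) ^ 2 := by
        gcongr; exact hAC _ ⟨by linarith [hd.2], by linarith [hd.1]⟩
      _ = ENNReal.ofReal d ^ (-(θ * 2)) * C ^ 2 := by
        rw [mul_pow, ← ENNReal.rpow_mul_natCast]; norm_num
    refine (setLIntegral_mono (by fun_prop) hle).trans_lt ?_
    rw [lintegral_mul_const _ (by fun_prop)]
    exact ENNReal.mul_lt_top (lintegral_Ioc_rpow_neg_lt_top (by linarith)) (ENNReal.pow_lt_top hC)
  · exact (setLIntegral_mono (by fun_prop) fun d hd =>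
      sq_neg_le_rpow (zero_lt_one.trans hd) (by linarith)).trans_lt
      (lintegral_Ioi_rpow_neg_lt_top (by linarith))

lemma lintegral_compl_sq_lt_top (h1 : 1 / 2 < γ) (h2 : γ < 3 / 2) :
    ∫⁻ u in (Icc 0 1)ᶜ, intervalPotential γ u ^ 2 < ⊤ := by
  have hreflect := (volume.measurePreserving_sub_left (1 : ℝ)).setLIntegral_comp_preimage_emb
    (MeasurableEquiv.subLeft (1 : ℝ)).measurableEmbedding
    (fun u => intervalPotential γ u ^ 2) (Iio 0)
  simp only [one_sub] at hreflect
  rw [show (Icc (0 : ℝ) 1)ᶜ = Iio 0 ∪ Ioi 1 by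
    ext u; simp only [mem_compl_iff, mem_Icc, mem_union, mem_Iio, mem_Ioi, not_and_or, not_le]]
  refine (lintegral_union_le _ _ _).trans_lt (ENNReal.add_lt_top.2 ⟨?_, ?_⟩)
  · exact lintegral_Iio_sq_lt_top h1 h2
  · rw [show (fun x : ℝ => 1 - x) ⁻¹' Iio 0 = Ioi 1 by simp] at hreflect
    exact hreflect ▸ lintegral_Iio_sq_lt_top h1 h2

lemma lintegral_sq_lt_top (h1 : 1 / 2 < γ) (h2 : γ < 1) :
    ∫⁻ u, intervalPotential γ u ^ 2 < ⊤ := by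
  obtain ⟨C, hC, hAC⟩ := exists_le_of_lt_one h2
  rw [← lintegral_add_compl _ (measurableSet_Icc (a := (0 : ℝ)) (b := 1))]
  refine ENNReal.add_lt_top.2 ⟨?_, lintegral_compl_sq_lt_top h1 (by linarith)⟩
  refine (setLIntegral_mono measurable_const fun u hu =>
    pow_le_pow_left₀ zero_le (hAC u ⟨by linarith [hu.1], hu.2⟩) 2).trans_lt ?_
  rw [setLIntegral_const, Real.volume_Icc]
  exact ENNReal.mul_lt_top (ENNReal.pow_lt_top hC) ENNReal.ofReal_lt_top

end intervalPotential

lemma ofReal_integral_le_lintegral_ofReal {X : Type*} [MeasurableSpace X] {μ : Measure X}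
    {f : X → ℝ} (hf : 0 ≤ᵐ[μ] f) :
    ENNReal.ofReal (∫ x, f x ∂μ) ≤ ∫⁻ x, ENNReal.ofReal (f x) ∂μ := by
  by_cases hi : Integrable f μ
  · exact (ofReal_integral_eq_lintegral_ofReal hi hf).le
  · simp [integral_undef hi]

lemma setLIntegral_prod_mul {X Y : Type*} [MeasurableSpace X] [MeasurableSpace Y]
    {μ : Measure X} {ν : Measure Y} [SFinite μ] [SFinite ν] {f : X → ℝ≥0∞} {g : Y → ℝ≥0∞}
    (hf : Measurable f) (hg : Measurable g) (s : Set X) (t : Set Y) :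
    ∫⁻ z in s ×ˢ t, f z.1 * g z.2 ∂μ.prod ν = (∫⁻ x in s, f x ∂μ) * ∫⁻ y in t, g y ∂ν := by
  rw [← Measure.prod_restrict]
  exact lintegral_prod_mul hf.aemeasurable hg.aemeasurable

section

variable {q1 q2 α β : ℝ}

lemma ofReal_sq_setIntegral_rho_le (hq1 : 0 < q1) (hq2 : 0 < q2) (hα : 0 < α) (hβ : 0 < β)
    (hαβ : α / q1 + β / q2 = 1) (p : ℝ × ℝ) :
    ENNReal.ofReal ((∫ q : ℝ × ℝ in Icc (0 : ℝ) 1 ×ˢ Icc (0 : ℝ) 1,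
        rho q1 q2 (q.1 - p.1) (q.2 - p.2)) ^ 2)
      ≤ intervalPotential α p.1 ^ 2 * intervalPotential β p.2 ^ 2 := by
  have hnn : ∀ q : ℝ × ℝ, 0 ≤ rho q1 q2 (q.1 - p.1) (q.2 - p.2) := fun q => by
    unfold rho; positivity
  rw [ENNReal.ofReal_pow (integral_nonneg hnn), ← mul_pow]
  gcongr
  calc ENNReal.ofReal (∫ q : ℝ × ℝ in Icc (0 : ℝ) 1 ×ˢ Icc (0 : ℝ) 1,
        rho q1 q2 (q.1 - p.1) (q.2 - p.2))
      ≤ ∫⁻ q : ℝ × ℝ in Icc (0 : ℝ) 1 ×ˢ Icc (0 : ℝ) 1,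
        ENNReal.ofReal (rho q1 q2 (q.1 - p.1) (q.2 - p.2)) :=
        ofReal_integral_le_lintegral_ofReal (ae_of_all _ hnn)
    _ ≤ ∫⁻ q : ℝ × ℝ in Icc (0 : ℝ) 1 ×ˢ Icc (0 : ℝ) 1,
        ENNReal.ofReal |q.1 - p.1| ^ (-α) * ENNReal.ofReal |q.2 - p.2| ^ (-β) :=
        lintegral_mono fun q => ofReal_rho_le hq1 hq2 hα hβ hαβ _ _
    _ = intervalPotential α p.1 * intervalPotential β p.2 :=
        setLIntegral_prod_mul (f := fun t => ENNReal.ofReal |t - p.1| ^ (-α))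
          (g := fun t => ENNReal.ofReal |t - p.2| ^ (-β)) (by fun_prop) (by fun_prop) _ _

lemma lintegral_sq_setIntegral_rho_le (hq1 : 0 < q1) (hq2 : 0 < q2) (hα : 0 < α) (hβ : 0 < β)
    (hαβ : α / q1 + β / q2 = 1) (s t : Set ℝ) :
    ∫⁻ p : ℝ × ℝ in s ×ˢ t, ENNReal.ofReal ((∫ q : ℝ × ℝ in Icc (0 : ℝ) 1 ×ˢ Icc (0 : ℝ) 1,
        rho q1 q2 (q.1 - p.1) (q.2 - p.2)) ^ 2)
      ≤ (∫⁻ u in s, intervalPotential α u ^ 2) * ∫⁻ v in t, intervalPotential β v ^ 2 :=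
  (lintegral_mono fun p => ofReal_sq_setIntegral_rho_le hq1 hq2 hα hβ hαβ p).trans_eq
    (setLIntegral_prod_mul ((intervalPotential.measurable α).pow_const 2)
      ((intervalPotential.measurable β).pow_const 2) s t)

end

theorem stmt_8 (q1 q2 : ℝ) (hq1 : 0 < q1) (hq2 : 0 < q2)
    (hQ : 1 / q1 + 1 / q2 < 1)
    (hE1 : 1 < 3 / (2 * q1) + 1 / q2) (hE2 : 1 < 1 / q1 + 3 / (2 * q2)) :
    ∫⁻ p : ℝ × ℝ in (Icc (0 : ℝ) 1 ×ˢ Icc (0 : ℝ) 1)ᶜ,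
      ENNReal.ofReal ((∫ q : ℝ × ℝ in Icc (0 : ℝ) 1 ×ˢ Icc (0 : ℝ) 1,
        rho q1 q2 (q.1 - p.1) (q.2 - p.2)) ^ 2) < ⊤ := by
  obtain ⟨α₁, β₁, hαβ₁, hα₁, hα₁', hβ₁, hβ₁'⟩ := exists_split_exponents hq1 hq2 hQ hE1
  obtain ⟨β₂, α₂, hβα₂, hβ₂, hβ₂', hα₂, hα₂'⟩ :=
    exists_split_exponents hq2 hq1 (by linarith) (by linarith)
  rw [compl_prod_eq_union]
  refine (lintegral_union_le _ _ _).trans_lt (ENNReal.add_lt_top.2 ⟨?_, ?_⟩)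
  · refine (lintegral_sq_setIntegral_rho_le hq1 hq2 (by linarith) (by linarith) hαβ₁
      _ _).trans_lt ?_
    rw [setLIntegral_univ]
    exact ENNReal.mul_lt_top (intervalPotential.lintegral_compl_sq_lt_top (by linarith) hα₁')
      (intervalPotential.lintegral_sq_lt_top hβ₁ hβ₁')
  · refine (lintegral_sq_setIntegral_rho_le (α := α₂) (β := β₂) hq1 hq2 (by linarith)
      (by linarith) (by linarith) _ _).trans_lt ?_
    rw [setLIntegral_univ]
    exact ENNReal.mul_lt_top (intervalPotential.lintegral_sq_lt_top hα₂ hα₂')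
      (intervalPotential.lintegral_compl_sq_lt_top (by linarith) hβ₂')
end

section
/- Let q2 > 3/2 and q1 > 0 with Q := 1/q1 + 1/q2 < 1. Then there is a constant C such that for all μ ≥ 2, ∫₀^∞ ( ∫₀^1 ∫₁^μ ρ(t, s+v) ds dt )² dv ≤ C, where ρ(t,s) = (|t|^{q1} + |s|^{q2})^{-1}. (This is the case (3 − 2q2) ∨ 0 = 0 of the bound O(μ^{(3−2q2)∨0}).) -/
open MeasureTheory Real Set

lemma rho_le_rpow_neg (q1 q2 t : ℝ) {s : ℝ} (hs : 0 < s) : rho q1 q2 t s ≤ s ^ (-q2) := by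
  rw [rho, abs_of_pos hs, rpow_neg hs.le]
  exact inv_anti₀ (rpow_pos_of_pos hs _) (le_add_of_nonneg_left (by positivity))

lemma integral_Ioc_add_rpow_neg_le {q a b v : ℝ} (hq : 1 < q) (hav : 0 < a + v) (hab : a ≤ b) :
    ∫ s in Ioc a b, (s + v) ^ (-q) ≤ (a + v) ^ (1 - q) / (q - 1) := by
  have hzero : (0 : ℝ) ∉ uIcc (a + v) (b + v) := by
    rw [uIcc_of_le (by linarith)]
    exact fun h => hav.not_ge h.1
  rw [← intervalIntegral.integral_of_le hab,
    intervalIntegral.integral_comp_add_right (fun x => x ^ (-q)),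
    integral_rpow (Or.inr ⟨by linarith, hzero⟩), ← neg_div_neg_eq, neg_sub, neg_add, neg_neg, ← sub_eq_neg_add]
  refine div_le_div_of_nonneg_right ?_ (by linarith)
  linarith [rpow_nonneg (show 0 ≤ b + v by linarith) (1 - q)]

lemma integral_Ioc_rho_add_le (q1 t : ℝ) {q2 v μ : ℝ} (hq2 : 1 < q2) (hv : 0 ≤ v)
    (hμ : 1 ≤ μ) :
    ∫ s in Ioc 1 μ, rho q1 q2 t (s + v) ≤ (1 + v) ^ (1 - q2) / (q2 - 1) := by
  have hint : IntegrableOn (fun s => (s + v) ^ (-q2)) (Ioc 1 μ) := by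
    refine (ContinuousOn.integrableOn_Icc ?_).mono_set Ioc_subset_Icc_self
    exact (continuous_id.add continuous_const).continuousOn.rpow_const
      fun s hs => Or.inl (ne_of_gt (show 0 < s + v by linarith [hs.1]))
  refine (integral_mono_of_nonneg (ae_of_all _ fun s => rho_nonneg _ _ _ _) hint ?_).trans
    (integral_Ioc_add_rpow_neg_le hq2 (by linarith) hμ)
  filter_upwards [ae_restrict_mem measurableSet_Ioc] with s hs
  exact rho_le_rpow_neg q1 q2 t (by linarith [hs.1])

lemma sq_integral_integral_rho_add_le (q1 : ℝ) {q2 v μ : ℝ} (hq2 : 1 < q2) (hv : 0 ≤ v)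
    (hμ : 1 ≤ μ) :
    (∫ t in Ioc (0 : ℝ) 1, ∫ s in Ioc (1 : ℝ) μ, rho q1 q2 t (s + v)) ^ 2
      ≤ ((q2 - 1) ^ 2)⁻¹ * (1 + v) ^ (2 * (1 - q2)) := by
  have hbound : ‖∫ t in Ioc (0 : ℝ) 1, ∫ s in Ioc (1 : ℝ) μ, rho q1 q2 t (s + v)‖
      ≤ (1 + v) ^ (1 - q2) / (q2 - 1) * volume.real (Ioc (0 : ℝ) 1) := by
    refine norm_setIntegral_le_of_norm_le_const measure_Ioc_lt_top fun t _ => ?_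
    rw [norm_of_nonneg (setIntegral_nonneg measurableSet_Ioc fun s _ => rho_nonneg _ _ _ _)]
    exact integral_Ioc_rho_add_le q1 t hq2 hv hμ
  rw [Real.volume_real_Ioc_of_le zero_le_one, sub_zero, mul_one, norm_eq_abs] at hbound
  calc _ ≤ ((1 + v) ^ (1 - q2) / (q2 - 1)) ^ 2 :=
        sq_le_sq' (abs_le.mp hbound).1 (abs_le.mp hbound).2
    _ = _ := by
      rw [div_pow, mul_comm 2, rpow_mul (by linarith), rpow_two, div_eq_inv_mul]

lemma lintegral_Ioi_one_add_rpow {p : ℝ} (hp : p < -1) :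
    ∫⁻ v in Ioi 0, ENNReal.ofReal ((1 + v) ^ p) = ENNReal.ofReal (-(p + 1))⁻¹ := by
  have hshift := (measurePreserving_add_right volume (1 : ℝ)).setLIntegral_comp_preimage_emb
    (measurableEmbedding_addRight 1) (fun x => ENNReal.ofReal (x ^ p)) (Ioi 1)
  rw [preimage_add_const_Ioi, sub_self] at hshift
  simp_rw [add_comm (1 : ℝ)]
  rw [hshift, ← ofReal_integral_eq_lintegral_ofReal (integrableOn_Ioi_rpow_of_lt hp one_pos),
    integral_Ioi_rpow_of_lt hp one_pos, one_rpow, neg_div, one_div, neg_inv]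
  · filter_upwards [ae_restrict_mem measurableSet_Ioi] with x hx
    exact rpow_nonneg (zero_lt_one.trans hx).le _

theorem stmt_11_general (q1 q2 : ℝ) (hq2 : 3 / 2 < q2) :
    ∃ C : ℝ, ∀ μ : ℝ, 2 ≤ μ →
      ∫⁻ v in Ioi (0 : ℝ),
        ENNReal.ofReal ((∫ t in Ioc (0 : ℝ) 1, ∫ s in Ioc (1 : ℝ) μ,
          rho q1 q2 t (s + v)) ^ 2)
        ≤ ENNReal.ofReal C := by
  refine ⟨((q2 - 1) ^ 2)⁻¹ * (2 * q2 - 3)⁻¹, fun μ hμ => ?_⟩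
  calc _ ≤ ∫⁻ v in Ioi (0 : ℝ),
          ENNReal.ofReal ((q2 - 1) ^ 2)⁻¹ * ENNReal.ofReal ((1 + v) ^ (2 * (1 - q2))) := by
        refine setLIntegral_mono' measurableSet_Ioi fun v hv => ?_
        rw [← ENNReal.ofReal_mul (by positivity)]
        exact ENNReal.ofReal_le_ofReal
          (sq_integral_integral_rho_add_le q1 (by linarith) hv.le (by linarith))
    _ = _ := by
      rw [lintegral_const_mul' _ _ ENNReal.ofReal_ne_top,
        lintegral_Ioi_one_add_rpow (by linarith), ← ENNReal.ofReal_mul (by positivity)]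
      congr 3
      ring

theorem stmt_11 (q1 q2 : ℝ) (hq1 : 0 < q1) (hq2 : 3 / 2 < q2)
    (hQ : 1 / q1 + 1 / q2 < 1) :
    ∃ C : ℝ, ∀ μ : ℝ, 2 ≤ μ →
      ∫⁻ v in Ioi (0 : ℝ),
        ENNReal.ofReal ((∫ t in Ioc (0 : ℝ) 1, ∫ s in Ioc (1 : ℝ) μ,
          rho q1 q2 t (s + v)) ^ 2)
        ≤ ENNReal.ofReal C :=
  stmt_11_general q1 q2 hq2
end

section
/- Let q1, q2 > 0 with Q := 1/q1 + 1/q2 < 1 and Q_{edge,2} := 1/q1 + 3/(2q2) < 1. Then the series ∑_{v ≥ 0} ( ∑_{t ∈ ℤ, s ≥ 1} |a(t, s+v)| )² converges, for any coefficients a : ℤ² → ℝ satisfying |a(t,s)| ≤ C ρ(t,s) for all (t,s) ≠ (0,0), where ρ(t,s) = (|t|^{q1} + |s|^{q2})^{-1}, and |a(0,0)| ≤ C. -/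
private lemma amgm {x y θ : ℝ} (hx : 0 ≤ x) (hy : 0 ≤ y) (h0 : 0 ≤ θ) (h1 : θ ≤ 1) :
    x ^ θ * y ^ (1 - θ) ≤ x + y := by
  have h := Real.geom_mean_le_arith_mean2_weighted (w₂ := 1-θ) h0 (by linarith) hx hy (by ring)
  nlinarith [mul_nonneg (sub_nonneg.mpr h1) hx, mul_nonneg h0 hy]

private lemma sum_shift {p : ℝ} (hp : 1 < p) :
    Summable (fun s : ℕ => ((s : ℝ) + 1) ^ (-p)) := by
  have h : Summable (fun n : ℕ => (n : ℝ) ^ (-p)) := Real.summable_nat_rpow.mpr (by linarith)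
  have h2 := (summable_nat_add_iff 1).mpr h
  refine h2.congr fun n => ?_
  push_cast
  ring_nf

private lemma g_summable {p : ℝ} (hp : 1 < p) :
    Summable (fun t : ℤ => if t = 0 then (1:ℝ) else |(t:ℝ)| ^ (-p)) := by
  have base : Summable (fun n : ℕ => ((n:ℝ)+1) ^ (-p)) := sum_shift hp
  apply Summable.of_nat_of_neg
  · refine (summable_nat_add_iff 1).mp (base.congr fun n => ?_)
    have h1 : ((n:ℤ)+1 : ℤ) ≠ 0 := by omega
    push_cast
    rw [if_neg (by exact_mod_cast h1), abs_of_nonneg (by positivity)]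
  · refine (summable_nat_add_iff 1).mp (base.congr fun n => ?_)
    have h1 : (-((n:ℤ)+1) : ℤ) ≠ 0 := by omega
    push_cast
    rw [if_neg (by exact_mod_cast h1)]
    rw [abs_neg, abs_of_nonneg (by positivity)]

theorem stmt_15 (q1 q2 C : ℝ) (hq1 : 0 < q1) (hq2 : 0 < q2)
    (hQ : 1 / q1 + 1 / q2 < 1) (hE : 1 / q1 + 3 / (2 * q2) < 1)
    (a : ℤ × ℤ → ℝ)
    (ha : ∀ t s : ℤ, (t, s) ≠ (0, 0) →
      |a (t, s)| ≤ C * ((|t| : ℝ) ^ q1 + (|s| : ℝ) ^ q2)⁻¹)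
    (ha0 : |a (0, 0)| ≤ C) :
    (∑' v : ℕ, (∑' t : ℤ, ∑' s : ℕ,
      ENNReal.ofReal |a (t, (s : ℤ) + 1 + (v : ℤ))|) ^ 2) < ⊤ := by
  have hC : 0 ≤ C := le_trans (abs_nonneg _) ha0
  set θ : ℝ := (1/q1 + (1 - 3/(2*q2)))/2 with hθdef
  have h3q2 : 0 < 3/(2*q2) := by positivity
  have hq1' : 0 < 1/q1 := by positivity
  have hθ1 : 1/q1 < θ := by rw [hθdef]; linarith
  have hθ2 : θ < 1 - 3/(2*q2) := by rw [hθdef]; linarith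
  have hθ0 : 0 < θ := lt_trans hq1' hθ1
  have hθlt1 : θ < 1 := by linarith
  have hp : 1 < θ * q1 := by
    rw [div_lt_iff₀ hq1] at hθ1; linarith
  set β : ℝ := (1-θ)*q2 with hβdef
  have hβ : 3/2 < β := by
    have h1 : 3/(2*q2) < 1-θ := by linarith
    have h2 := mul_lt_mul_of_pos_right h1 hq2
    have heq : 3/(2*q2)*q2 = 3/2 := by field_simp
    rw [heq] at h2; exact h2
  have hβq2 : β ≤ q2 := by nlinarith
  set β1 : ℝ := β/2 + 1/4 with hβ1def
  set β2 : ℝ := β/2 - 1/4 with hβ2def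
  have hβ1 : 1 < β1 := by rw [hβ1def]; linarith
  have hβ2 : 0 < β2 := by rw [hβ2def]; linarith
  have hβ2' : 1 < 2*β2 := by rw [hβ2def]; linarith
  have hsplit : β1 + β2 = β := by rw [hβ1def, hβ2def]; ring
  set g : ℤ → ℝ := fun t => if t = 0 then (1:ℝ) else |(t:ℝ)| ^ (-(θ*q1)) with hgdef
  have hg0 : ∀ t, 0 ≤ g t := by
    intro t; rw [hgdef]; dsimp only
    split
    · norm_num
    · positivity
  -- pointwise bound
  have key : ∀ (t : ℤ) (s v : ℕ),
      |a (t, (s:ℤ) + 1 + (v:ℤ))| ≤ g t * (((s:ℝ)+1)^(-β1) * (C * ((v:ℝ)+1)^(-β2))) := by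
    intro t s v
    set w : ℤ := (s:ℤ) + 1 + (v:ℤ) with hwdef
    have hw1 : (1:ℝ) ≤ (w:ℝ) := by
      rw [hwdef]; push_cast
      have h1 : (0:ℝ) ≤ (s:ℝ) := Nat.cast_nonneg s
      have h2 : (0:ℝ) ≤ (v:ℝ) := Nat.cast_nonneg v
      linarith
    have hw0 : (0:ℝ) < (w:ℝ) := lt_of_lt_of_le one_pos hw1
    have hwne : w ≠ 0 := by
      intro h; rw [h] at hw0; simp at hw0
    have habs : |(w:ℝ)| = (w:ℝ) := abs_of_pos hw0
    have hbound := ha t w (by simp [Prod.ext_iff, hwne])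
    rw [habs] at hbound
    have hws : ((s:ℝ)+1) ≤ (w:ℝ) := by
      rw [hwdef]; push_cast; have h2 : (0:ℝ) ≤ (v:ℝ) := Nat.cast_nonneg v; linarith
    have hwv : ((v:ℝ)+1) ≤ (w:ℝ) := by
      rw [hwdef]; push_cast; have h1 : (0:ℝ) ≤ (s:ℝ) := Nat.cast_nonneg s; linarith
    -- step 1
    have step1 : |(t:ℝ)|^q1 * 0 + 0 = 0 := by ring
    have main1 : (|(t:ℝ)|^q1 + (w:ℝ)^q2)⁻¹ ≤ g t * (w:ℝ)^(-β) := by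
      rcases eq_or_ne t 0 with rfl | ht
      · simp only [hgdef, if_pos rfl, abs_zero, Int.cast_zero, one_mul]
        rw [Real.zero_rpow (ne_of_gt hq1), zero_add, ← Real.rpow_neg (le_of_lt hw0)]
        exact Real.rpow_le_rpow_of_exponent_le hw1 (by linarith)
      · have ht1 : (1:ℝ) ≤ |(t:ℝ)| := by
          have : (1:ℤ) ≤ |t| := Int.one_le_abs ht
          exact_mod_cast this
        have ht0 : (0:ℝ) < |(t:ℝ)| := lt_of_lt_of_le one_pos ht1
        have hgm : |(t:ℝ)|^(θ*q1) * (w:ℝ)^β ≤ |(t:ℝ)|^q1 + (w:ℝ)^q2 := by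
          have e1 : |(t:ℝ)|^(θ*q1) = (|(t:ℝ)|^q1)^θ := by
            rw [← Real.rpow_mul (le_of_lt ht0)]; ring_nf
          have e2 : (w:ℝ)^β = ((w:ℝ)^q2)^(1-θ) := by
            rw [← Real.rpow_mul (le_of_lt hw0), hβdef]; ring_nf
          rw [e1, e2]
          exact amgm (Real.rpow_nonneg (le_of_lt ht0) _) (Real.rpow_nonneg (le_of_lt hw0) _)
            (le_of_lt hθ0) (le_of_lt hθlt1)
        have hpos : (0:ℝ) < |(t:ℝ)|^(θ*q1) * (w:ℝ)^β := by positivity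
        have := inv_anti₀ hpos hgm
        rw [hgdef]; dsimp only; rw [if_neg ht]
        calc (|(t:ℝ)|^q1 + (w:ℝ)^q2)⁻¹
            ≤ (|(t:ℝ)|^(θ*q1) * (w:ℝ)^β)⁻¹ := this
          _ = |(t:ℝ)|^(-(θ*q1)) * (w:ℝ)^(-β) := by
              rw [mul_inv, ← Real.rpow_neg (le_of_lt ht0), ← Real.rpow_neg (le_of_lt hw0)]
    -- step 2
    have step2 : (w:ℝ)^(-β) ≤ ((s:ℝ)+1)^(-β1) * ((v:ℝ)+1)^(-β2) := by
      have e : (w:ℝ)^(-β) = (w:ℝ)^(-β1) * (w:ℝ)^(-β2) := by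
        rw [← Real.rpow_add hw0, ← hsplit]; ring_nf
      rw [e]
      have hs1 : (0:ℝ) < (s:ℝ)+1 := by positivity
      have hv1 : (0:ℝ) < (v:ℝ)+1 := by positivity
      have f1 : (w:ℝ)^(-β1) ≤ ((s:ℝ)+1)^(-β1) := by
        rw [Real.rpow_neg (le_of_lt hw0), Real.rpow_neg (le_of_lt hs1)]
        exact inv_anti₀ (by positivity) (Real.rpow_le_rpow (le_of_lt hs1) hws (by linarith))
      have f2 : (w:ℝ)^(-β2) ≤ ((v:ℝ)+1)^(-β2) := by
        rw [Real.rpow_neg (le_of_lt hw0), Real.rpow_neg (le_of_lt hv1)]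
        exact inv_anti₀ (by positivity) (Real.rpow_le_rpow (le_of_lt hv1) hwv (by linarith))
      exact mul_le_mul f1 f2 (by positivity) (by positivity)
    calc |a (t, w)| ≤ C * (|(t:ℝ)|^q1 + (w:ℝ)^q2)⁻¹ := hbound
      _ ≤ C * (g t * (w:ℝ)^(-β)) := by
          apply mul_le_mul_of_nonneg_left main1 hC
      _ ≤ C * (g t * (((s:ℝ)+1)^(-β1) * ((v:ℝ)+1)^(-β2))) := by
          apply mul_le_mul_of_nonneg_left _ hC
          exact mul_le_mul_of_nonneg_left step2 (hg0 t)
      _ = g t * (((s:ℝ)+1)^(-β1) * (C * ((v:ℝ)+1)^(-β2))) := by ring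
  -- ENNReal part
  have hK1sum : Summable (fun n : ℕ => ((n:ℝ)+1)^(-β1)) := sum_shift hβ1
  set K1 : ENNReal := ∑' n:ℕ, ENNReal.ofReal (((n:ℝ)+1)^(-β1)) with hK1def
  have hK1 : K1 ≠ ⊤ := by
    rw [hK1def, ← ENNReal.ofReal_tsum_of_nonneg (fun n => by positivity) hK1sum]
    exact ENNReal.ofReal_ne_top
  set G : ENNReal := ∑' t:ℤ, ENNReal.ofReal (g t) with hGdef
  have hG : G ≠ ⊤ := by
    rw [hGdef, ← ENNReal.ofReal_tsum_of_nonneg hg0 (g_summable hp)]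
    exact ENNReal.ofReal_ne_top
  set D : ENNReal := G * K1 * ENNReal.ofReal C with hDdef
  have hD : D ≠ ⊤ := ENNReal.mul_ne_top (ENNReal.mul_ne_top hG hK1) ENNReal.ofReal_ne_top
  have inner : ∀ v : ℕ, (∑' t:ℤ, ∑' s:ℕ, ENNReal.ofReal |a (t, (s:ℤ) + 1 + (v:ℤ))|)
      ≤ D * ENNReal.ofReal (((v:ℝ)+1)^(-β2)) := by
    intro v
    have hv0 : (0:ℝ) ≤ ((v:ℝ)+1)^(-β2) := by positivity
    have step : ∀ t:ℤ, (∑' s:ℕ, ENNReal.ofReal |a (t, (s:ℤ) + 1 + (v:ℤ))|)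
        ≤ ENNReal.ofReal (g t) * (K1 * (ENNReal.ofReal C * ENNReal.ofReal (((v:ℝ)+1)^(-β2)))) := by
      intro t
      calc (∑' s:ℕ, ENNReal.ofReal |a (t, (s:ℤ) + 1 + (v:ℤ))|)
          ≤ ∑' s:ℕ, ENNReal.ofReal (g t * (((s:ℝ)+1)^(-β1) * (C * ((v:ℝ)+1)^(-β2)))) :=
            ENNReal.tsum_le_tsum fun s => ENNReal.ofReal_le_ofReal (key t s v)
        _ = ENNReal.ofReal (g t) * ∑' s:ℕ, ENNReal.ofReal (((s:ℝ)+1)^(-β1) * (C * ((v:ℝ)+1)^(-β2))) := by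
            rw [← ENNReal.tsum_mul_left]
            exact tsum_congr fun s => ENNReal.ofReal_mul (hg0 t)
        _ = ENNReal.ofReal (g t) * (K1 * (ENNReal.ofReal C * ENNReal.ofReal (((v:ℝ)+1)^(-β2)))) := by
            congr 1
            rw [hK1def, ← ENNReal.tsum_mul_right]
            refine tsum_congr fun s => ?_
            rw [ENNReal.ofReal_mul (by positivity), ENNReal.ofReal_mul hC]
    calc (∑' t:ℤ, ∑' s:ℕ, ENNReal.ofReal |a (t, (s:ℤ) + 1 + (v:ℤ))|)
        ≤ ∑' t:ℤ, ENNReal.ofReal (g t) * (K1 * (ENNReal.ofReal C * ENNReal.ofReal (((v:ℝ)+1)^(-β2)))) :=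
          ENNReal.tsum_le_tsum step
      _ = G * (K1 * (ENNReal.ofReal C * ENNReal.ofReal (((v:ℝ)+1)^(-β2)))) := by
          rw [ENNReal.tsum_mul_right]
      _ = D * ENNReal.ofReal (((v:ℝ)+1)^(-β2)) := by rw [hDdef]; ring
  calc (∑' v : ℕ, (∑' t : ℤ, ∑' s : ℕ,
      ENNReal.ofReal |a (t, (s : ℤ) + 1 + (v : ℤ))|) ^ 2)
      ≤ ∑' v : ℕ, (D * ENNReal.ofReal (((v:ℝ)+1)^(-β2)))^2 :=
        ENNReal.tsum_le_tsum fun v => by gcongr; exact inner v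
    _ = D^2 * ∑' v : ℕ, ENNReal.ofReal (((v:ℝ)+1)^(-(2*β2))) := by
        rw [← ENNReal.tsum_mul_left]
        refine tsum_congr fun v => ?_
        rw [mul_pow, ← ENNReal.ofReal_pow (by positivity)]
        congr 1
        rw [← Real.rpow_natCast (((v:ℝ)+1)^(-β2)) 2, ← Real.rpow_mul (by positivity)]
        norm_num
        ring_nf
    _ < ⊤ := by
        have hfin : (∑' v : ℕ, ENNReal.ofReal (((v:ℝ)+1)^(-(2*β2)))) ≠ ⊤ := by
          rw [← ENNReal.ofReal_tsum_of_nonneg (fun n => by positivity) (sum_shift hβ2')]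
          exact ENNReal.ofReal_ne_top
        exact ENNReal.mul_lt_top (ENNReal.pow_ne_top hD).lt_top hfin.lt_top
end
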